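/- arXiv:1706.05298 — 7 statements merged into one kernel-verified Lean document; each statement's English description precedes it below -/
import Mathlib

section
/- Let N ≥ 1 and α > N/2. For u = (u_1,...,u_N) with each u_j ∈ H^3(0,ℓ_j), satisfying u_j(ℓ_j) = u_j'(ℓ_j) = 0 for all j, u_j(0) = u_k(0) for all j,k, and Σ_{j=1}^N u_j''(0) = -α u_1(0), one has Σ_{j=1}^N ∫_0^{ℓ_j} u_j(x)(-u_j'(x) - u_j'''(x)) dx = (N/2 - α)|u_1(0)|^2 - (1/2) Σ_{j=1}^N |u_j'(0)|^2 ≤ 0. Hence the operator A u = -(u_j' + u_j''')_j with this domain is dissipative on Π_j L^2(0,ℓ_j). -/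
open scoped BigOperators
open MeasureTheory intervalIntegral Real Set

/-!
On each edge `u (-u' - u''')` is the derivative of `u'²/2 - u²/2 - u u''`. The boundary terms at
`ℓ j` vanish, and at the central node the common value `c = u j 0` together with the Kirchhoff
condition `∑ u j'' 0 = -α c` collapse the node terms `∑ (c²/2 + c u j'' 0)` to `(N/2 - α) c²`.
-/

section KdVEnergy

variable {u : ℝ → ℝ}

lemma ContDiff.hasDerivAt_iteratedDeriv {n : ℕ} (hu : ContDiff ℝ n u) {k : ℕ} (hk : k < n)
    (x : ℝ) : HasDerivAt (iteratedDeriv k u) (iteratedDeriv (k + 1) u x) x := by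
  rw [iteratedDeriv_succ]
  exact ((hu.differentiable_iteratedDeriv k (by exact_mod_cast hk)) x).hasDerivAt

lemma integral_mul_neg_deriv_sub_iteratedDeriv_three (hu : ContDiff ℝ 3 u) (a b : ℝ) :
    ∫ x in a..b, u x * (-deriv u x - iteratedDeriv 3 u x)
      = (deriv u b ^ 2 / 2 - u b ^ 2 / 2 - u b * iteratedDeriv 2 u b)
        - (deriv u a ^ 2 / 2 - u a ^ 2 / 2 - u a * iteratedDeriv 2 u a) := by
  have hderiv : ∀ x, HasDerivAt
      (fun x => deriv u x ^ 2 / 2 - u x ^ 2 / 2 - u x * iteratedDeriv 2 u x)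
      (u x * (-deriv u x - iteratedDeriv 3 u x)) x := by
    intro x
    have h0 := hu.hasDerivAt_iteratedDeriv (k := 0) (by norm_num) x
    have h1 := hu.hasDerivAt_iteratedDeriv (k := 1) (by norm_num) x
    have h2 := hu.hasDerivAt_iteratedDeriv (k := 2) (by norm_num) x
    simp only [iteratedDeriv_zero, zero_add, iteratedDeriv_one] at h0 h1
    have hF := ((h1.fun_pow 2).div_const 2).sub ((h0.fun_pow 2).div_const 2) |>.sub (h0.mul h2)
    exact hF.congr_deriv (by simp only [Nat.reduceAdd]; ring)
  have hcont : Continuous fun x => u x * (-deriv u x - iteratedDeriv 3 u x) := by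
    have h1 := hu.continuous_iteratedDeriv 1 (by norm_num)
    rw [iteratedDeriv_one] at h1
    exact hu.continuous.mul (h1.neg.sub (hu.continuous_iteratedDeriv 3 le_rfl))
  exact integral_eq_sub_of_hasDerivAt (fun x _ => hderiv x) (hcont.intervalIntegrable a b)

end KdVEnergy

theorem stmt1_general (N : ℕ) (hN : 0 < N) (α : ℝ) (hα : (N : ℝ) / 2 < α)
    (ℓ : Fin N → ℝ) (u : Fin N → ℝ → ℝ)
    (hu : ∀ j, ContDiff ℝ 3 (u j))
    (hext : ∀ j, u j (ℓ j) = 0 ∧ deriv (u j) (ℓ j) = 0)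
    (hcont : ∀ j k, u j 0 = u k 0)
    (hnode : ∑ j, iteratedDeriv 2 (u j) 0 = -α * u ⟨0, hN⟩ 0) :
    ∑ j, ∫ x in (0:ℝ)..(ℓ j), u j x * (-(deriv (u j) x) - iteratedDeriv 3 (u j) x)
      = ((N : ℝ)/2 - α) * (u ⟨0, hN⟩ 0)^2 - (1/2) * ∑ j, (deriv (u j) 0)^2 ∧
    ((N : ℝ)/2 - α) * (u ⟨0, hN⟩ 0)^2 - (1/2) * ∑ j, (deriv (u j) 0)^2 ≤ 0 := by
  set c := u ⟨0, hN⟩ 0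
  have hedge : ∀ j,
      ∫ x in (0:ℝ)..(ℓ j), u j x * (-(deriv (u j) x) - iteratedDeriv 3 (u j) x)
        = c ^ 2 / 2 + c * iteratedDeriv 2 (u j) 0 - deriv (u j) 0 ^ 2 / 2 := by
    intro j
    rw [integral_mul_neg_deriv_sub_iteratedDeriv_three (hu j), (hext j).1, (hext j).2,
      hcont j ⟨0, hN⟩]
    ring
  have hnonpos : ((N : ℝ) / 2 - α) * c ^ 2 ≤ 0 :=
    mul_nonpos_of_nonpos_of_nonneg (by linarith) (sq_nonneg c)
  have hsq : 0 ≤ ∑ j, deriv (u j) 0 ^ 2 := Finset.sum_nonneg fun j _ => sq_nonneg _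
  refine ⟨?_, by linarith⟩
  simp only [hedge, Finset.sum_sub_distrib, Finset.sum_add_distrib, ← Finset.mul_sum, hnode,
    ← Finset.sum_div, Finset.sum_const, Finset.card_univ, Fintype.card_fin, nsmul_eq_mul]
  ring

theorem stmt1 (N : ℕ) (hN : 0 < N) (α : ℝ) (hα : (N : ℝ) / 2 < α)
    (ℓ : Fin N → ℝ) (hℓ : ∀ j, 0 < ℓ j) (u : Fin N → ℝ → ℝ)
    (hu : ∀ j, ContDiff ℝ 3 (u j))
    (hext : ∀ j, u j (ℓ j) = 0 ∧ deriv (u j) (ℓ j) = 0)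
    (hcont : ∀ j k, u j 0 = u k 0)
    (hnode : ∑ j, iteratedDeriv 2 (u j) 0 = -α * u ⟨0, hN⟩ 0) :
    ∑ j, ∫ x in (0:ℝ)..(ℓ j), u j x * (-(deriv (u j) x) - iteratedDeriv 3 (u j) x)
      = ((N : ℝ)/2 - α) * (u ⟨0, hN⟩ 0)^2 - (1/2) * ∑ j, (deriv (u j) 0)^2 ∧
    ((N : ℝ)/2 - α) * (u ⟨0, hN⟩ 0)^2 - (1/2) * ∑ j, (deriv (u j) 0)^2 ≤ 0 :=
  stmt1_general N hN α hα ℓ u hu hext hcont hnode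
end

section
/- Let N ≥ 1, α > N/2, and let u be a smooth solution of the linear KdV system on the star-network with inhomogeneous central node condition Σ_j ∂_x^2 u_j(t,0) = -α u_1(t,0) + g(t), u_j(t,0) = u_k(t,0), u_j(t,ℓ_j) = ∂_x u_j(t,ℓ_j) = 0. Then for all s ∈ [0,T]: Σ_j ∫_0^{ℓ_j} |u_j(s,x)|^2 dx + ∫_0^s Σ_j |∂_x u_j(t,0)|^2 dt + (α - N/2) ∫_0^s |u_1(t,0)|^2 dt ≤ Σ_j ∫_0^{ℓ_j} |u_j(0,x)|^2 dx + (α - N/2)^{-1} ∫_0^T g(t)^2 dt. -/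
open scoped BigOperators
open MeasureTheory intervalIntegral Real Set

noncomputable def px (f : ℝ × ℝ → ℝ) : ℝ × ℝ → ℝ := fun p => fderiv ℝ f p (0, 1)
noncomputable def pt' (f : ℝ × ℝ → ℝ) : ℝ × ℝ → ℝ := fun p => fderiv ℝ f p (1, 0)

lemma contDiff_fderiv_apply {f : ℝ × ℝ → ℝ} (hf : ContDiff ℝ (⊤ : ℕ∞) f) (v : ℝ × ℝ) :
    ContDiff ℝ (⊤ : ℕ∞) (fun p => fderiv ℝ f p v) :=
  (ContinuousLinearMap.apply ℝ ℝ v).contDiff.comp (hf.fderiv_right (by simp))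

lemma contDiff_px {f : ℝ × ℝ → ℝ} (hf : ContDiff ℝ (⊤ : ℕ∞) f) : ContDiff ℝ (⊤ : ℕ∞) (px f) :=
  contDiff_fderiv_apply hf _

lemma contDiff_pt' {f : ℝ × ℝ → ℝ} (hf : ContDiff ℝ (⊤ : ℕ∞) f) : ContDiff ℝ (⊤ : ℕ∞) (pt' f) :=
  contDiff_fderiv_apply hf _

lemma hasDerivAt_px {f : ℝ × ℝ → ℝ} (hf : ContDiff ℝ (⊤ : ℕ∞) f) (t x : ℝ) :
    HasDerivAt (fun y => f (t, y)) (px f (t, x)) x := by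
  have h1 : HasDerivAt (fun y : ℝ => ((t, y) : ℝ × ℝ)) (0, 1) x :=
    (hasDerivAt_const x t).prodMk (hasDerivAt_id x)
  exact ((hf.differentiable (by simp) (t, x)).hasFDerivAt).comp_hasDerivAt x h1

lemma hasDerivAt_pt' {f : ℝ × ℝ → ℝ} (hf : ContDiff ℝ (⊤ : ℕ∞) f) (t x : ℝ) :
    HasDerivAt (fun τ => f (τ, x)) (pt' f (t, x)) t := by
  have h1 : HasDerivAt (fun τ : ℝ => ((τ, x) : ℝ × ℝ)) (1, 0) t :=
    (hasDerivAt_id t).prodMk (hasDerivAt_const t x)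
  exact ((hf.differentiable (by simp) (t, x)).hasFDerivAt).comp_hasDerivAt t h1

lemma swap_integrals {a b : ℝ} (ha : 0 ≤ a) (hb : 0 ≤ b) (f : ℝ × ℝ → ℝ) (hf : Continuous f) :
    (∫ x in (0:ℝ)..a, ∫ t in (0:ℝ)..b, f (t, x)) = ∫ t in (0:ℝ)..b, ∫ x in (0:ℝ)..a, f (t, x) := by
  rw [intervalIntegral.integral_of_le ha, intervalIntegral.integral_of_le hb]
  simp_rw [intervalIntegral.integral_of_le hb, intervalIntegral.integral_of_le ha]
  have hint : Integrable (Function.uncurry (fun x t => f (t, x)))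
      ((volume.restrict (Ioc (0:ℝ) a)).prod (volume.restrict (Ioc (0:ℝ) b))) := by
    rw [Measure.prod_restrict]
    have : IntegrableOn (fun p : ℝ × ℝ => f (p.2, p.1)) (Icc (0:ℝ) a ×ˢ Icc (0:ℝ) b) :=
      ((hf.comp continuous_swap).continuousOn).integrableOn_compact
        (isCompact_Icc.prod isCompact_Icc)
    exact this.mono_set (Set.prod_mono Ioc_subset_Icc_self Ioc_subset_Icc_self)
  exact MeasureTheory.integral_integral_swap hint

theorem stmt4 (N : ℕ) (hN : 0 < N) (T : ℝ) (hT : 0 < T) (α : ℝ) (hα : (N : ℝ) / 2 < α)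
    (ℓ : Fin N → ℝ) (hℓ : ∀ j, 0 < ℓ j) (u : Fin N → ℝ → ℝ → ℝ)
    (hu : ∀ j, ContDiff ℝ (⊤ : ℕ∞) (fun p : ℝ × ℝ => u j p.1 p.2))
    (hpde : ∀ j, ∀ t ∈ Set.Icc (0:ℝ) T, ∀ x ∈ Set.Icc (0:ℝ) (ℓ j),
      deriv (fun τ => u j τ x) t + deriv (u j t) x + iteratedDeriv 3 (u j t) x = 0)
    (hcont : ∀ j k, ∀ t ∈ Set.Icc (0:ℝ) T, u j t 0 = u k t 0)
    (hext : ∀ j, ∀ t ∈ Set.Icc (0:ℝ) T, u j t (ℓ j) = 0 ∧ deriv (u j t) (ℓ j) = 0)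
    (g : ℝ → ℝ)
    (hnode : ∀ t ∈ Set.Icc (0:ℝ) T, ∑ j, iteratedDeriv 2 (u j t) 0 = -α * u ⟨0, hN⟩ t 0 + g t) :
    ∀ s ∈ Set.Icc (0:ℝ) T,
      (∑ j, ∫ x in (0:ℝ)..(ℓ j), (u j s x)^2)
        + (∫ t in (0:ℝ)..s, ∑ j, (deriv (u j t) 0)^2)
        + (α - (N : ℝ)/2) * ∫ t in (0:ℝ)..s, (u ⟨0, hN⟩ t 0)^2
      ≤ (∑ j, ∫ x in (0:ℝ)..(ℓ j), (u j 0 x)^2)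
        + (α - (N : ℝ)/2)⁻¹ * ∫ t in (0:ℝ)..T, (g t)^2 := by
  intro s hs
  obtain ⟨hs0, hsT⟩ := hs
  set c : ℝ := α - (N : ℝ)/2 with hc_def
  have hc : 0 < c := by rw [hc_def]; linarith
  set U : Fin N → ℝ × ℝ → ℝ := fun j p => u j p.1 p.2 with hU_def
  have hU : ∀ j, ContDiff ℝ (⊤ : ℕ∞) (U j) := hu
  -- continuity facts
  have hcU : ∀ j, Continuous (U j) := fun j => (hU j).continuous
  have hcF1 : ∀ j, Continuous (px (U j)) := fun j => (contDiff_px (hU j)).continuous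
  have hcF2 : ∀ j, Continuous (px (px (U j))) := fun j => (contDiff_px (contDiff_px (hU j))).continuous
  have hcF3 : ∀ j, Continuous (px (px (px (U j)))) :=
    fun j => (contDiff_px (contDiff_px (contDiff_px (hU j)))).continuous
  have hcFt : ∀ j, Continuous (pt' (U j)) := fun j => (contDiff_pt' (hU j)).continuous
  -- derivative translations
  have hd1 : ∀ j t, deriv (u j t) = fun x => px (U j) (t, x) := by
    intro j t; funext x; exact (hasDerivAt_px (hU j) t x).deriv
  have hd2 : ∀ j t, iteratedDeriv 2 (u j t) = fun x => px (px (U j)) (t, x) := by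
    intro j t
    rw [show (2:ℕ) = 1 + 1 from rfl, iteratedDeriv_succ, iteratedDeriv_one, hd1]
    funext x; exact (hasDerivAt_px (contDiff_px (hU j)) t x).deriv
  have hd3 : ∀ j t, iteratedDeriv 3 (u j t) = fun x => px (px (px (U j))) (t, x) := by
    intro j t
    rw [show (3:ℕ) = 2 + 1 from rfl, iteratedDeriv_succ, hd2]
    funext x; exact (hasDerivAt_px (contDiff_px (contDiff_px (hU j))) t x).deriv
  have hdt : ∀ j t x, deriv (fun τ => u j τ x) t = pt' (U j) (t, x) :=
    fun j t x => (hasDerivAt_pt' (hU j) t x).deriv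
  -- PDE in new notation
  have hpde' : ∀ j, ∀ t ∈ Set.Icc (0:ℝ) T, ∀ x ∈ Set.Icc (0:ℝ) (ℓ j),
      pt' (U j) (t, x) = -(px (U j) (t, x) + px (px (px (U j))) (t, x)) := by
    intro j t ht x hx
    have h := hpde j t ht x hx
    rw [hdt, hd1, hd3] at h
    linarith
  -- node condition in new notation
  have hnode' : ∀ t ∈ Set.Icc (0:ℝ) T,
      ∑ j, px (px (U j)) (t, 0) = -α * u ⟨0, hN⟩ t 0 + g t := by
    intro t ht
    rw [← hnode t ht]
    exact Finset.sum_congr rfl fun j _ => by rw [hd2]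
  -- D = ∂_t (u^2)
  set D : Fin N → ℝ × ℝ → ℝ := fun j p => 2 * U j p * pt' (U j) p with hD_def
  have hcD : ∀ j, Continuous (D j) := fun j => (continuous_const.mul (hcU j)).mul (hcFt j)
  -- boundary function
  set b : Fin N → ℝ → ℝ := fun j t =>
    (u j t 0)^2 + 2 * u j t 0 * px (px (U j)) (t, 0) - (px (U j) (t, 0))^2 with hb_def
  have hcb : ∀ j, Continuous (b j) := by
    intro j
    have h0 : Continuous fun t => U j (t, 0) := (hcU j).comp (continuous_id.prodMk continuous_const)
    have h2 : Continuous fun t => px (px (U j)) (t, 0) :=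
      (hcF2 j).comp (continuous_id.prodMk continuous_const)
    have h1 : Continuous fun t => px (U j) (t, 0) :=
      (hcF1 j).comp (continuous_id.prodMk continuous_const)
    exact ((h0.pow 2).add ((continuous_const.mul h0).mul h2)).sub (h1.pow 2)
  -- Step C: FTC in x
  have stepC : ∀ t ∈ Set.Icc (0:ℝ) T, ∀ j, (∫ x in (0:ℝ)..ℓ j, D j (t, x)) = b j t := by
    intro t ht j
    have hder : ∀ x ∈ uIcc (0:ℝ) (ℓ j), HasDerivAt
        (fun x => -((U j (t, x))^2 + 2 * U j (t, x) * px (px (U j)) (t, x)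
          - (px (U j) (t, x))^2)) (D j (t, x)) x := by
      intro x hx
      have hx' : x ∈ Set.Icc (0:ℝ) (ℓ j) := by rwa [uIcc_of_le (hℓ j).le] at hx
      have h0 := hasDerivAt_px (hU j) t x
      have h1 := hasDerivAt_px (contDiff_px (hU j)) t x
      have h2 := hasDerivAt_px (contDiff_px (contDiff_px (hU j))) t x
      have hA := (((h0.fun_pow 2).fun_add ((h0.const_mul 2).fun_mul h2)).fun_sub (h1.fun_pow 2)).fun_neg
      refine hA.congr_deriv ?_
      have hpe := hpde' j t ht x hx'
      rw [hD_def]; simp only []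
      rw [hpe]; ring
    have hDcx : IntervalIntegrable (fun x => D j (t, x)) volume 0 (ℓ j) :=
      ((hcD j).comp (continuous_const.prodMk continuous_id)).intervalIntegrable _ _
    rw [intervalIntegral.integral_eq_sub_of_hasDerivAt hder hDcx]
    obtain ⟨he1, he2⟩ := hext j t ht
    have hUl : U j (t, ℓ j) = 0 := he1
    have hF1l : px (U j) (t, ℓ j) = 0 := by
      have := congrFun (hd1 j t) (ℓ j); rw [← this, he2]
    have hU0 : U j (t, 0) = u j t 0 := rfl
    rw [hUl, hF1l, hU0, hb_def]
    ring
  -- Step A: FTC in t plus Fubini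
  have stepA : ∀ j, (∫ x in (0:ℝ)..ℓ j, (u j s x)^2) =
      (∫ x in (0:ℝ)..ℓ j, (u j 0 x)^2) + ∫ t in (0:ℝ)..s, ∫ x in (0:ℝ)..ℓ j, D j (t, x) := by
    intro j
    have hpt : ∀ x, (∫ t in (0:ℝ)..s, D j (t, x)) = (u j s x)^2 - (u j 0 x)^2 := by
      intro x
      have hder : ∀ τ ∈ uIcc (0:ℝ) s, HasDerivAt (fun τ => (u j τ x)^2) (D j (τ, x)) τ := by
        intro τ _
        have h := hasDerivAt_pt' (hU j) τ x
        have h3 := h.fun_pow 2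
        refine h3.congr_deriv ?_
        simp [hD_def]
        try ring
      rw [intervalIntegral.integral_eq_sub_of_hasDerivAt hder
        (((hcD j).comp (continuous_id.prodMk continuous_const)).intervalIntegrable _ _)]
    rw [← swap_integrals (hℓ j).le hs0 (D j) (hcD j)]
    rw [intervalIntegral.integral_congr (g := fun x => (u j s x)^2 - (u j 0 x)^2)
      (fun x _ => hpt x)]
    have hi1 : IntervalIntegrable (fun x => (u j s x)^2) volume 0 (ℓ j) :=
      (((hcU j).comp (continuous_const.prodMk continuous_id)).pow 2).intervalIntegrable _ _
    have hi2 : IntervalIntegrable (fun x => (u j 0 x)^2) volume 0 (ℓ j) :=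
      (((hcU j).comp (continuous_const.prodMk continuous_id)).pow 2).intervalIntegrable _ _
    rw [intervalIntegral.integral_sub hi1 hi2]
    ring
  -- combine A and C
  have stepA' : ∀ j, (∫ x in (0:ℝ)..ℓ j, (u j s x)^2) =
      (∫ x in (0:ℝ)..ℓ j, (u j 0 x)^2) + ∫ t in (0:ℝ)..s, b j t := by
    intro j
    rw [stepA j]
    congr 1
    apply intervalIntegral.integral_congr
    intro t ht
    rw [uIcc_of_le hs0] at ht
    exact stepC t ⟨ht.1, ht.2.trans hsT⟩ j
  -- sum over j
  have E1 : (∑ j, ∫ x in (0:ℝ)..ℓ j, (u j s x)^2) =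
      (∑ j, ∫ x in (0:ℝ)..ℓ j, (u j 0 x)^2) + ∫ t in (0:ℝ)..s, ∑ j, b j t := by
    rw [Finset.sum_congr rfl fun j _ => stepA' j, Finset.sum_add_distrib]
    congr 1
    rw [intervalIntegral.integral_finset_sum]
    intro j _
    exact (hcb j).intervalIntegrable _ _
  -- rewrite the deriv term
  have hrw : (∫ t in (0:ℝ)..s, ∑ j, (deriv (u j t) 0)^2)
      = ∫ t in (0:ℝ)..s, ∑ j, (px (U j) (t, 0))^2 := by
    apply intervalIntegral.integral_congr
    intro t _
    exact Finset.sum_congr rfl fun j _ => by rw [hd1]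
  -- continuity of combined integrands
  have hcS : Continuous fun t => ∑ j, (px (U j) (t, 0))^2 := by
    apply continuous_finset_sum
    intro j _
    exact (((hcF1 j).comp (continuous_id.prodMk continuous_const)).pow 2)
  have hcv : Continuous fun t => u (⟨0, hN⟩ : Fin N) t 0 :=
    (hcU ⟨0, hN⟩).comp (continuous_id.prodMk continuous_const)
  have hcB : Continuous fun t => ∑ j, b j t := continuous_finset_sum _ fun j _ => hcb j
  -- G : continuous version of g
  set G : ℝ → ℝ := fun t => (∑ j, px (px (U j)) (t, 0)) + α * u ⟨0, hN⟩ t 0 with hG_def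
  have hcG : Continuous G := by
    apply Continuous.add
    · exact continuous_finset_sum _ fun j _ =>
        (hcF2 j).comp (continuous_id.prodMk continuous_const)
    · exact continuous_const.mul hcv
  have hGg : ∀ t ∈ Set.Icc (0:ℝ) T, G t = g t := by
    intro t ht
    rw [hG_def]; simp only []
    rw [hnode' t ht]; ring
  -- pointwise inequality
  have key : ∀ t ∈ Set.Icc (0:ℝ) s,
      (∑ j, b j t) + (∑ j, (px (U j) (t, 0))^2) + c * (u ⟨0, hN⟩ t 0)^2
        ≤ c⁻¹ * (G t)^2 := by
    intro t ht
    have htT : t ∈ Set.Icc (0:ℝ) T := ⟨ht.1, ht.2.trans hsT⟩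
    have hv : ∀ j, u j t 0 = u ⟨0, hN⟩ t 0 := fun j => hcont j ⟨0, hN⟩ t htT
    have hsum2 := hnode' t htT
    have hGt : G t = g t := hGg t htT
    have e1 : (∑ j, b j t) = (N:ℝ) * (u ⟨0, hN⟩ t 0)^2
        + 2 * u ⟨0, hN⟩ t 0 * (-α * u ⟨0, hN⟩ t 0 + g t) - ∑ j, (px (U j) (t, 0))^2 := by
      have hb' : ∀ j : Fin N, b j t = ((u ⟨0, hN⟩ t 0)^2
          + 2 * u ⟨0, hN⟩ t 0 * px (px (U j)) (t, 0)) - (px (U j) (t, 0))^2 := by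
        intro j; rw [hb_def]; simp only []; rw [hv j]
      rw [Finset.sum_congr rfl fun j _ => hb' j, Finset.sum_sub_distrib,
        Finset.sum_add_distrib, Finset.sum_const, Finset.card_univ, Fintype.card_fin,
        ← Finset.mul_sum, hsum2]
      ring
    rw [hGt, e1]
    set y := u ⟨0, hN⟩ t 0 with hy_def
    have hci' : c⁻¹ * c = 1 := inv_mul_cancel₀ hc.ne'
    have hexp : c⁻¹ * (g t - c * y)^2 = c⁻¹ * (g t)^2 - 2 * y * g t + c * y^2 := by
      calc c⁻¹ * (g t - c * y)^2
          = c⁻¹ * (g t)^2 - 2 * (c⁻¹ * c) * (y * g t) + (c⁻¹ * c) * (c * y^2) := by ring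
        _ = c⁻¹ * (g t)^2 - 2 * y * g t + c * y^2 := by rw [hci']; ring
    have h2 : (0:ℝ) ≤ c⁻¹ * (g t - c * y)^2 := by positivity
    rw [hexp] at h2
    have hlin : (N:ℝ) * y^2 + 2 * y * (-α * y + g t) + c * y^2
        = -(c * y^2) + 2 * y * g t := by rw [hc_def]; ring
    nlinarith [h2, hlin, sq_nonneg (g t - c * y)]
  -- integrability for the comparison
  have hH : Continuous fun t => (∑ j, b j t) + (∑ j, (px (U j) (t, 0))^2)
      + c * (u ⟨0, hN⟩ t 0)^2 :=
    (hcB.add hcS).add (continuous_const.mul (hcv.pow 2))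
  -- the big comparison
  have comp1 : (∫ t in (0:ℝ)..s, ((∑ j, b j t) + (∑ j, (px (U j) (t, 0))^2)
        + c * (u ⟨0, hN⟩ t 0)^2)) ≤ ∫ t in (0:ℝ)..s, c⁻¹ * (G t)^2 := by
    apply intervalIntegral.integral_mono_on hs0
      (hH.intervalIntegrable _ _)
      ((continuous_const.mul (hcG.pow 2)).intervalIntegrable _ _)
    exact key
  have comp2 : (∫ t in (0:ℝ)..s, (G t)^2) ≤ ∫ t in (0:ℝ)..T, (G t)^2 :=
    intervalIntegral.integral_mono_interval le_rfl hs0 hsT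
      (Filter.Eventually.of_forall fun t => sq_nonneg _)
      ((hcG.pow 2).intervalIntegrable _ _)
  have comp3 : (∫ t in (0:ℝ)..T, (G t)^2) = ∫ t in (0:ℝ)..T, (g t)^2 := by
    apply intervalIntegral.integral_congr
    intro t ht
    rw [uIcc_of_le hT.le] at ht
    exact congrArg (fun z => z^2) (hGg t ht)
  -- split the combined integral
  have hsplit : (∫ t in (0:ℝ)..s, ((∑ j, b j t) + (∑ j, (px (U j) (t, 0))^2)
        + c * (u ⟨0, hN⟩ t 0)^2))
      = (∫ t in (0:ℝ)..s, ∑ j, b j t) + (∫ t in (0:ℝ)..s, ∑ j, (px (U j) (t, 0))^2)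
        + c * ∫ t in (0:ℝ)..s, (u ⟨0, hN⟩ t 0)^2 := by
    rw [intervalIntegral.integral_add ((hcB.fun_add hcS).intervalIntegrable _ _)
      ((continuous_const.fun_mul (hcv.fun_pow 2)).intervalIntegrable _ _),
      intervalIntegral.integral_add (hcB.intervalIntegrable _ _) (hcS.intervalIntegrable _ _),
      intervalIntegral.integral_const_mul]
  -- final assembly
  rw [E1, hrw]
  have hfin : (∫ t in (0:ℝ)..s, ∑ j, b j t)
      + (∫ t in (0:ℝ)..s, ∑ j, (px (U j) (t, 0))^2)
      + c * ∫ t in (0:ℝ)..s, (u ⟨0, hN⟩ t 0)^2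
      ≤ c⁻¹ * ∫ t in (0:ℝ)..T, (g t)^2 := by
    rw [← hsplit]
    calc (∫ t in (0:ℝ)..s, ((∑ j, b j t) + (∑ j, (px (U j) (t, 0))^2)
            + c * (u ⟨0, hN⟩ t 0)^2))
        ≤ ∫ t in (0:ℝ)..s, c⁻¹ * (G t)^2 := comp1
      _ = c⁻¹ * ∫ t in (0:ℝ)..s, (G t)^2 := intervalIntegral.integral_const_mul _ _
      _ ≤ c⁻¹ * ∫ t in (0:ℝ)..T, (G t)^2 :=
          mul_le_mul_of_nonneg_left comp2 (inv_nonneg.2 hc.le)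
      _ = c⁻¹ * ∫ t in (0:ℝ)..T, (g t)^2 := by rw [comp3]
  linarith [hfin]
end

section
/- Under the same hypotheses as the energy estimate for the linear KdV system with forcing g, the traces satisfy ‖u_1(·,0)‖_{L^2(0,T)}^2 ≤ (α - N/2)^{-1} ‖u^0‖_{L^2}^2 + (α - N/2)^{-2} ‖g‖_{L^2(0,T)}^2 and Σ_j ‖∂_x u_j(·,0)‖_{L^2(0,T)}^2 ≤ ‖u^0‖_{L^2}^2 + (α - N/2)^{-1} ‖g‖_{L^2(0,T)}^2, where ‖u^0‖_{L^2}^2 = Σ_j ∫_0^{ℓ_j} |u_j(0,x)|^2 dx. -/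
open scoped BigOperators
open MeasureTheory intervalIntegral Real Set

noncomputable section

abbrev Uf (w : ℝ → ℝ → ℝ) : ℝ × ℝ → ℝ := fun p => w p.1 p.2

def pdx (f : ℝ × ℝ → ℝ) (p : ℝ × ℝ) : ℝ := fderiv ℝ f p (0, 1)
def pdt (f : ℝ × ℝ → ℝ) (p : ℝ × ℝ) : ℝ := fderiv ℝ f p (1, 0)

lemma contDiff_pdx {f : ℝ × ℝ → ℝ} (hf : ContDiff ℝ (⊤ : ℕ∞) f) : ContDiff ℝ (⊤ : ℕ∞) (pdx f) :=
  (hf.fderiv_right (by simp)).clm_apply contDiff_const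

lemma contDiff_pdt {f : ℝ × ℝ → ℝ} (hf : ContDiff ℝ (⊤ : ℕ∞) f) : ContDiff ℝ (⊤ : ℕ∞) (pdt f) :=
  (hf.fderiv_right (by simp)).clm_apply contDiff_const

lemma hasDerivAt_pdx {f : ℝ × ℝ → ℝ} (hf : ContDiff ℝ (⊤ : ℕ∞) f) (t x : ℝ) :
    HasDerivAt (fun y => f (t, y)) (pdx f (t, x)) x := by
  have h1 : HasFDerivAt f (fderiv ℝ f (t, x)) (t, x) :=
    (hf.differentiable (by simp) (t, x)).hasFDerivAt
  have h2 : HasDerivAt (fun y : ℝ => ((t, y) : ℝ × ℝ)) (((0 : ℝ), (1 : ℝ)) : ℝ × ℝ) x :=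
    (hasDerivAt_const x t).prodMk (hasDerivAt_id x)
  exact h1.comp_hasDerivAt x h2

lemma hasDerivAt_pdt {f : ℝ × ℝ → ℝ} (hf : ContDiff ℝ (⊤ : ℕ∞) f) (t x : ℝ) :
    HasDerivAt (fun τ => f (τ, x)) (pdt f (t, x)) t := by
  have h1 : HasFDerivAt f (fderiv ℝ f (t, x)) (t, x) :=
    (hf.differentiable (by simp) (t, x)).hasFDerivAt
  have h2 : HasDerivAt (fun τ : ℝ => ((τ, x) : ℝ × ℝ)) (((1 : ℝ), (0 : ℝ)) : ℝ × ℝ) t :=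
    (hasDerivAt_id t).prodMk (hasDerivAt_const t x)
  exact h1.comp_hasDerivAt t h2

lemma rep_deriv (w : ℝ → ℝ → ℝ) (hw : ContDiff ℝ (⊤ : ℕ∞) (Uf w)) (t x : ℝ) :
    deriv (w t) x = pdx (Uf w) (t, x) :=
  (hasDerivAt_pdx hw t x).deriv

lemma rep_it2 (w : ℝ → ℝ → ℝ) (hw : ContDiff ℝ (⊤ : ℕ∞) (Uf w)) (t x : ℝ) :
    iteratedDeriv 2 (w t) x = pdx (pdx (Uf w)) (t, x) := by
  have h : deriv (w t) = fun y => pdx (Uf w) (t, y) := funext fun y => rep_deriv w hw t y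
  rw [show (2 : ℕ) = 1 + 1 from rfl, iteratedDeriv_succ, iteratedDeriv_one, h]
  exact (hasDerivAt_pdx (contDiff_pdx hw) t x).deriv

lemma rep_it3 (w : ℝ → ℝ → ℝ) (hw : ContDiff ℝ (⊤ : ℕ∞) (Uf w)) (t x : ℝ) :
    iteratedDeriv 3 (w t) x = pdx (pdx (pdx (Uf w))) (t, x) := by
  have h : iteratedDeriv 2 (w t) = fun y => pdx (pdx (Uf w)) (t, y) :=
    funext fun y => rep_it2 w hw t y
  rw [show (3 : ℕ) = 2 + 1 from rfl, iteratedDeriv_succ, h]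
  exact (hasDerivAt_pdx (contDiff_pdx (contDiff_pdx hw)) t x).deriv

lemma rep_t (w : ℝ → ℝ → ℝ) (hw : ContDiff ℝ (⊤ : ℕ∞) (Uf w)) (t x : ℝ) :
    deriv (fun τ => w τ x) t = pdt (Uf w) (t, x) :=
  (hasDerivAt_pdt hw t x).deriv

lemma myswap {a b c d : ℝ} (hab : a ≤ b) (hcd : c ≤ d) {f : ℝ → ℝ → ℝ}
    (hf : Continuous (Function.uncurry f)) :
    (∫ t in a..b, ∫ x in c..d, f t x) = ∫ x in c..d, ∫ t in a..b, f t x := by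
  rw [intervalIntegral.integral_of_le hab, intervalIntegral.integral_of_le hcd]
  simp_rw [intervalIntegral.integral_of_le hab, intervalIntegral.integral_of_le hcd]
  rw [MeasureTheory.integral_integral_swap]
  rw [MeasureTheory.Measure.prod_restrict]
  apply MeasureTheory.IntegrableOn.mono_set
    (t := (Icc a b) ×ˢ (Icc c d))
  · exact (hf.continuousOn).integrableOn_compact (isCompact_Icc.prod isCompact_Icc)
  · exact Set.prod_mono Ioc_subset_Icc_self Ioc_subset_Icc_self


lemma slice_cont_x {f : ℝ × ℝ → ℝ} (hf : Continuous f) (t : ℝ) :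
    Continuous (fun y => f (t, y)) :=
  hf.comp (continuous_const.prodMk continuous_id)

lemma slice_cont_t {f : ℝ × ℝ → ℝ} (hf : Continuous f) (x : ℝ) :
    Continuous (fun τ => f (τ, x)) :=
  hf.comp (continuous_id.prodMk continuous_const)

lemma energy_identity (T L : ℝ) (hT : 0 < T) (hL : 0 < L) (w : ℝ → ℝ → ℝ)
    (hw : ContDiff ℝ (⊤ : ℕ∞) (Uf w))
    (hpde : ∀ t ∈ Set.Icc (0:ℝ) T, ∀ x ∈ Set.Icc (0:ℝ) L,
      pdt (Uf w) (t, x) + pdx (Uf w) (t, x) + pdx (pdx (pdx (Uf w))) (t, x) = 0)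
    (hext : ∀ t ∈ Set.Icc (0:ℝ) T, w t L = 0 ∧ pdx (Uf w) (t, L) = 0) :
    (∫ x in (0:ℝ)..L, (w T x)^2) - (∫ x in (0:ℝ)..L, (w 0 x)^2)
      = ∫ t in (0:ℝ)..T,
          ((w t 0)^2 + 2 * w t 0 * pdx (pdx (Uf w)) (t, 0) - (pdx (Uf w) (t, 0))^2) := by
  set W := Uf w with hW
  have hWc : Continuous W := hw.continuous
  have hpdxc : Continuous (pdx W) := (contDiff_pdx hw).continuous
  have hpdx2c : Continuous (pdx (pdx W)) := (contDiff_pdx (contDiff_pdx hw)).continuous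
  have hpdx3c : Continuous (pdx (pdx (pdx W))) :=
    (contDiff_pdx (contDiff_pdx (contDiff_pdx hw))).continuous
  have hpdtc : Continuous (pdt W) := (contDiff_pdt hw).continuous
  set P : ℝ → ℝ → ℝ := fun t x => 2 * w t x * pdt W (t, x) with hP
  have hPc : Continuous (Function.uncurry P) := by
    have : Function.uncurry P = fun p : ℝ × ℝ => 2 * W p * pdt W p := rfl
    rw [this]
    exact (continuous_const.mul hWc).mul hpdtc
  -- Step A : spatial integration by parts using the PDE
  have stepA : ∀ t ∈ Set.Icc (0:ℝ) T, (∫ x in (0:ℝ)..L, P t x)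
      = (w t 0)^2 + 2 * w t 0 * pdx (pdx W) (t, 0) - (pdx W (t, 0))^2 := by
    intro t ht
    set Gf : ℝ → ℝ := fun x =>
      -((w t x)^2 + 2 * w t x * pdx (pdx W) (t, x) - (pdx W (t, x))^2) with hGf
    have hG : ∀ x, HasDerivAt Gf
        (-(2 * w t x * pdx W (t, x) + 2 * w t x * pdx (pdx (pdx W)) (t, x))) x := by
      intro x
      have h0 : HasDerivAt (fun y => w t y) (pdx W (t, x)) x := hasDerivAt_pdx hw t x
      have h1 : HasDerivAt (fun y => pdx W (t, y)) (pdx (pdx W) (t, x)) x :=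
        hasDerivAt_pdx (contDiff_pdx hw) t x
      have h2 : HasDerivAt (fun y => pdx (pdx W) (t, y)) (pdx (pdx (pdx W)) (t, x)) x :=
        hasDerivAt_pdx (contDiff_pdx (contDiff_pdx hw)) t x
      have h3 := (((h0.pow 2).add ((h0.const_mul 2).mul h2)).sub (h1.pow 2)).neg
      exact h3.congr_deriv (by push_cast; ring)
    have hint : IntervalIntegrable
        (fun x => -(2 * w t x * pdx W (t, x) + 2 * w t x * pdx (pdx (pdx W)) (t, x)))
        volume 0 L := by
      apply Continuous.intervalIntegrable
      have c1 : Continuous (fun y => w t y) := slice_cont_x hWc t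
      exact (((continuous_const.mul c1).mul (slice_cont_x hpdxc t)).add
        ((continuous_const.mul c1).mul (slice_cont_x hpdx3c t))).neg
    have hFTC : (∫ x in (0:ℝ)..L,
          -(2 * w t x * pdx W (t, x) + 2 * w t x * pdx (pdx (pdx W)) (t, x)))
        = Gf L - Gf 0 :=
      intervalIntegral.integral_eq_sub_of_hasDerivAt (fun x _ => hG x) hint
    have hcongr : (∫ x in (0:ℝ)..L, P t x) = ∫ x in (0:ℝ)..L,
        -(2 * w t x * pdx W (t, x) + 2 * w t x * pdx (pdx (pdx W)) (t, x)) := by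
      apply intervalIntegral.integral_congr
      intro x hx
      rw [Set.uIcc_of_le hL.le] at hx
      have hp := hpde t ht x hx
      simp only [hP]
      linear_combination (2 * w t x) * hp
    obtain ⟨he1, he2⟩ := hext t ht
    have hGl : Gf L = 0 := by simp [hGf, he1, he2]
    rw [hcongr, hFTC, hGl, hGf]
    ring
  -- Step B : time FTC at fixed x
  have stepB : ∀ x : ℝ, (∫ t in (0:ℝ)..T, P t x) = (w T x)^2 - (w 0 x)^2 := by
    intro x
    apply intervalIntegral.integral_eq_sub_of_hasDerivAt
    · intro t _
      have h0 : HasDerivAt (fun τ => w τ x) (pdt W (t, x)) t := hasDerivAt_pdt hw t x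
      have h1 := h0.pow 2
      exact h1.congr_deriv (by push_cast; ring)
    · apply Continuous.intervalIntegrable
      exact hPc.comp (continuous_id.prodMk continuous_const)
  calc (∫ x in (0:ℝ)..L, (w T x)^2) - (∫ x in (0:ℝ)..L, (w 0 x)^2)
      = ∫ x in (0:ℝ)..L, ((w T x)^2 - (w 0 x)^2) := by
        rw [intervalIntegral.integral_sub]
        · exact ((slice_cont_x hWc T).pow 2).intervalIntegrable 0 L
        · exact ((slice_cont_x hWc 0).pow 2).intervalIntegrable 0 L
    _ = ∫ x in (0:ℝ)..L, ∫ t in (0:ℝ)..T, P t x :=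
        intervalIntegral.integral_congr (fun x _ => (stepB x).symm)
    _ = ∫ t in (0:ℝ)..T, ∫ x in (0:ℝ)..L, P t x := (myswap hT.le hL.le hPc).symm
    _ = ∫ t in (0:ℝ)..T,
          ((w t 0)^2 + 2 * w t 0 * pdx (pdx W) (t, 0) - (pdx W (t, 0))^2) := by
        apply intervalIntegral.integral_congr
        intro t ht
        rw [Set.uIcc_of_le hT.le] at ht
        exact stepA t ht


end

theorem stmt5 (N : ℕ) (hN : 0 < N) (T : ℝ) (hT : 0 < T) (α : ℝ) (hα : (N : ℝ) / 2 < α)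
    (ℓ : Fin N → ℝ) (hℓ : ∀ j, 0 < ℓ j) (u : Fin N → ℝ → ℝ → ℝ)
    (hu : ∀ j, ContDiff ℝ (⊤ : ℕ∞) (fun p : ℝ × ℝ => u j p.1 p.2))
    (hpde : ∀ j, ∀ t ∈ Set.Icc (0:ℝ) T, ∀ x ∈ Set.Icc (0:ℝ) (ℓ j),
      deriv (fun τ => u j τ x) t + deriv (u j t) x + iteratedDeriv 3 (u j t) x = 0)
    (hcont : ∀ j k, ∀ t ∈ Set.Icc (0:ℝ) T, u j t 0 = u k t 0)
    (hext : ∀ j, ∀ t ∈ Set.Icc (0:ℝ) T, u j t (ℓ j) = 0 ∧ deriv (u j t) (ℓ j) = 0)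
    (g : ℝ → ℝ)
    (hnode : ∀ t ∈ Set.Icc (0:ℝ) T, ∑ j, iteratedDeriv 2 (u j t) 0 = -α * u ⟨0, hN⟩ t 0 + g t) :
    (∫ t in (0:ℝ)..T, (u ⟨0, hN⟩ t 0)^2
      ≤ (α - (N : ℝ)/2)⁻¹ * (∑ j, ∫ x in (0:ℝ)..(ℓ j), (u j 0 x)^2)
        + ((α - (N : ℝ)/2)^2)⁻¹ * ∫ t in (0:ℝ)..T, (g t)^2) ∧
    (∑ j, ∫ t in (0:ℝ)..T, (deriv (u j t) 0)^2
      ≤ (∑ j, ∫ x in (0:ℝ)..(ℓ j), (u j 0 x)^2)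
        + (α - (N : ℝ)/2)⁻¹ * ∫ t in (0:ℝ)..T, (g t)^2) := by
  have hle : (0:ℝ) ≤ T := hT.le
  have hUw : ∀ j, ContDiff ℝ (⊤ : ℕ∞) (Uf (u j)) := hu
  set β : ℝ := α - (N : ℝ)/2 with hβdef
  have hβ : 0 < β := by simp only [hβdef]; linarith
  have hβinv : (0:ℝ) < β⁻¹ := inv_pos.2 hβ
  -- continuous avatars
  set v : ℝ → ℝ := fun t => u ⟨0, hN⟩ t 0 with hv
  have hvc : Continuous v := slice_cont_t (hUw ⟨0, hN⟩).continuous 0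
  set d1 : Fin N → ℝ → ℝ := fun j t => pdx (Uf (u j)) (t, 0) with hd1
  set d2 : Fin N → ℝ → ℝ := fun j t => pdx (pdx (Uf (u j))) (t, 0) with hd2
  have hd1c : ∀ j, Continuous (d1 j) := fun j =>
    slice_cont_t (contDiff_pdx (hUw j)).continuous 0
  have hd2c : ∀ j, Continuous (d2 j) := fun j =>
    slice_cont_t (contDiff_pdx (contDiff_pdx (hUw j))).continuous 0
  have huc : ∀ j, Continuous (fun t => u j t 0) := fun j =>
    slice_cont_t (hUw j).continuous 0
  -- per-edge energy identity
  have key : ∀ j, (∫ x in (0:ℝ)..(ℓ j), (u j T x)^2) - (∫ x in (0:ℝ)..(ℓ j), (u j 0 x)^2)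
      = ∫ t in (0:ℝ)..T, ((u j t 0)^2 + 2 * u j t 0 * d2 j t - (d1 j t)^2) := by
    intro j
    apply energy_identity T (ℓ j) hT (hℓ j) (u j) (hUw j)
    · intro t ht x hx
      have h := hpde j t ht x hx
      rwa [rep_t (u j) (hUw j) t x, rep_deriv (u j) (hUw j) t x,
        rep_it3 (u j) (hUw j) t x] at h
    · intro t ht
      obtain ⟨h1, h2⟩ := hext j t ht
      rw [rep_deriv (u j) (hUw j) t (ℓ j)] at h2
      exact ⟨h1, h2⟩
  -- integrability of the per-edge boundary terms
  have hBc : ∀ j, Continuous (fun t => (u j t 0)^2 + 2 * u j t 0 * d2 j t - (d1 j t)^2) :=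
    fun j => (((huc j).pow 2).add ((continuous_const.mul (huc j)).mul (hd2c j))).sub
      ((hd1c j).pow 2)
  -- continuous avatar of g
  set gt : ℝ → ℝ := fun t => α * v t + ∑ j, d2 j t with hgt
  have hgtc : Continuous gt := (continuous_const.mul hvc).add
    (continuous_finset_sum _ fun j _ => hd2c j)
  have hnode' : ∀ t ∈ Set.Icc (0:ℝ) T, ∑ j, d2 j t = -α * v t + g t := by
    intro t ht
    have h := hnode t ht
    have h2 : ∑ j, iteratedDeriv 2 (u j t) 0 = ∑ j, d2 j t :=
      Finset.sum_congr rfl fun j _ => rep_it2 (u j) (hUw j) t 0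
    rw [h2] at h
    exact h
  have hgeq : ∀ t ∈ Set.Icc (0:ℝ) T, g t = gt t := by
    intro t ht
    have h := hnode' t ht
    simp only [hgt]
    linarith
  have hIg : (∫ t in (0:ℝ)..T, (g t)^2) = ∫ t in (0:ℝ)..T, (gt t)^2 := by
    apply intervalIntegral.integral_congr
    intro t ht
    rw [Set.uIcc_of_le hle] at ht
    show (g t)^2 = (gt t)^2
    rw [hgeq t ht]
  -- sum the energy identities
  have hsum : (∑ j, ∫ x in (0:ℝ)..(ℓ j), (u j T x)^2)
      - (∑ j, ∫ x in (0:ℝ)..(ℓ j), (u j 0 x)^2)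
      = ∫ t in (0:ℝ)..T, ∑ j, ((u j t 0)^2 + 2 * u j t 0 * d2 j t - (d1 j t)^2) := by
    rw [← Finset.sum_sub_distrib]
    rw [intervalIntegral.integral_finset_sum
      (fun j _ => ((hBc j).intervalIntegrable 0 T))]
    exact Finset.sum_congr rfl fun j _ => key j
  -- pointwise bound on the summed boundary term
  have hpt : ∀ t ∈ Set.Icc (0:ℝ) T,
      (∑ j, ((u j t 0)^2 + 2 * u j t 0 * d2 j t - (d1 j t)^2))
      ≤ -β * (v t)^2 + β⁻¹ * (gt t)^2 - ∑ j, (d1 j t)^2 := by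
    intro t ht
    have hveq : ∀ j, u j t 0 = v t := fun j => hcont j ⟨0, hN⟩ t ht
    have hnn : ∑ j, d2 j t = -α * v t + gt t := by
      rw [hnode' t ht, hgeq t ht]
    have hexp : (∑ j, ((u j t 0)^2 + 2 * u j t 0 * d2 j t - (d1 j t)^2))
        = (N : ℝ) * (v t)^2 + 2 * v t * (∑ j, d2 j t) - ∑ j, (d1 j t)^2 := by
      simp only [hveq]
      rw [Finset.sum_sub_distrib, Finset.sum_add_distrib, Finset.sum_const,
        ← Finset.mul_sum]
      simp [Finset.card_univ, mul_comm]
    rw [hexp, hnn]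
    have hkey : β * (v t)^2 + β⁻¹ * (gt t)^2 - 2 * v t * gt t
        = β⁻¹ * (β * v t - gt t)^2 := by
      field_simp
      ring
    have hge : 0 ≤ β⁻¹ * (β * v t - gt t)^2 := mul_nonneg hβinv.le (sq_nonneg _)
    have h2 : 2 * v t * gt t ≤ β * (v t)^2 + β⁻¹ * (gt t)^2 := by linarith
    have hβN : (N : ℝ) - 2 * α = -2 * β := by rw [hβdef]; ring
    nlinarith [sq_nonneg (v t), h2]
  -- integrate the bound
  have hRHSc : Continuous (fun t => -β * (v t)^2 + β⁻¹ * (gt t)^2 - ∑ j, (d1 j t)^2) :=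
    ((continuous_const.mul (hvc.pow 2)).add (continuous_const.mul (hgtc.pow 2))).sub
      (continuous_finset_sum _ fun j _ => (hd1c j).pow 2)
  have hmono : (∫ t in (0:ℝ)..T, ∑ j, ((u j t 0)^2 + 2 * u j t 0 * d2 j t - (d1 j t)^2))
      ≤ ∫ t in (0:ℝ)..T, (-β * (v t)^2 + β⁻¹ * (gt t)^2 - ∑ j, (d1 j t)^2) :=
    intervalIntegral.integral_mono_on hle
      ((continuous_finset_sum _ fun j _ => hBc j).intervalIntegrable 0 T)
      (hRHSc.intervalIntegrable 0 T) hpt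
  have hsplit : (∫ t in (0:ℝ)..T, (-β * (v t)^2 + β⁻¹ * (gt t)^2 - ∑ j, (d1 j t)^2))
      = -β * (∫ t in (0:ℝ)..T, (v t)^2) + β⁻¹ * (∫ t in (0:ℝ)..T, (gt t)^2)
        - ∑ j, ∫ t in (0:ℝ)..T, (d1 j t)^2 := by
    rw [intervalIntegral.integral_sub
        (((continuous_const.fun_mul (hvc.fun_pow 2)).fun_add
          (continuous_const.fun_mul (hgtc.fun_pow 2))).intervalIntegrable 0 T)
        ((continuous_finset_sum _ fun j _ => (hd1c j).fun_pow 2).intervalIntegrable 0 T),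
      intervalIntegral.integral_add
        ((continuous_const.fun_mul (hvc.fun_pow 2)).intervalIntegrable 0 T)
        ((continuous_const.fun_mul (hgtc.fun_pow 2)).intervalIntegrable 0 T),
      intervalIntegral.integral_const_mul, intervalIntegral.integral_const_mul,
      intervalIntegral.integral_finset_sum
        (fun j _ => (((hd1c j).fun_pow 2).intervalIntegrable 0 T))]
  -- nonnegativity facts
  have hET : 0 ≤ ∑ j, ∫ x in (0:ℝ)..(ℓ j), (u j T x)^2 :=
    Finset.sum_nonneg fun j _ =>
      intervalIntegral.integral_nonneg (hℓ j).le fun x _ => sq_nonneg _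
  have hIvnn : 0 ≤ ∫ t in (0:ℝ)..T, (v t)^2 :=
    intervalIntegral.integral_nonneg hle fun t _ => sq_nonneg _
  have hISnn : 0 ≤ ∑ j, ∫ t in (0:ℝ)..T, (d1 j t)^2 :=
    Finset.sum_nonneg fun j _ =>
      intervalIntegral.integral_nonneg hle fun t _ => sq_nonneg _
  set E0 : ℝ := ∑ j, ∫ x in (0:ℝ)..(ℓ j), (u j 0 x)^2 with hE0
  set Iv : ℝ := ∫ t in (0:ℝ)..T, (v t)^2 with hIvdef
  set Ig : ℝ := ∫ t in (0:ℝ)..T, (gt t)^2 with hIgdef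
  set IS : ℝ := ∑ j, ∫ t in (0:ℝ)..T, (d1 j t)^2 with hISdef
  have master : -E0 ≤ -β * Iv + β⁻¹ * Ig - IS := by
    rw [hsplit] at hmono
    linarith [hET, hmono, hsum]
  constructor
  · -- first trace estimate
    show Iv ≤ β⁻¹ * E0 + ((β)^2)⁻¹ * ∫ t in (0:ℝ)..T, (g t)^2
    rw [hIg]
    have h1 : β * Iv ≤ E0 + β⁻¹ * Ig := by linarith
    calc Iv = β⁻¹ * (β * Iv) := by field_simp
      _ ≤ β⁻¹ * (E0 + β⁻¹ * Ig) := mul_le_mul_of_nonneg_left h1 hβinv.le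
      _ = β⁻¹ * E0 + (β^2)⁻¹ * Ig := by rw [sq, mul_inv]; ring
  · -- second trace estimate
    have hrw : ∀ j, (∫ t in (0:ℝ)..T, (deriv (u j t) 0)^2)
        = ∫ t in (0:ℝ)..T, (d1 j t)^2 := by
      intro j
      apply intervalIntegral.integral_congr
      intro t _
      show (deriv (u j t) 0)^2 = (d1 j t)^2
      rw [rep_deriv (u j) (hUw j) t 0]
    calc (∑ j, ∫ t in (0:ℝ)..T, (deriv (u j t) 0)^2)
        = IS := Finset.sum_congr rfl fun j _ => hrw j
      _ ≤ E0 + β⁻¹ * ∫ t in (0:ℝ)..T, (g t)^2 := by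
          rw [hIg]
          nlinarith [mul_nonneg hβ.le hIvnn]
end

section
/- Let L > 0. There exist λ ∈ ℂ and a nonzero y ∈ H^3(0,L) satisfying λ y + y' + y''' = 0 with y(0) = y'(0) = y(L) = y'(L) = 0 if and only if L ∈ 𝒩 := { 2π √((k² + l² + kl)/3) : k, l ∈ ℕ* }. -/
open scoped BigOperators
open MeasureTheory intervalIntegral Real Set

/-- The set of critical lengths of Rosier. -/
def IsCriticalLength (x : ℝ) : Prop :=
  ∃ k l : ℕ, 1 ≤ k ∧ 1 ≤ l ∧
    x = 2 * Real.pi * Real.sqrt (((k : ℝ)^2 + (l : ℝ)^2 + (k : ℝ) * (l : ℝ)) / 3)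

/-!
Let `μ₁, μ₂, μ₃` be the roots of `X³ + X - λ`, so that `e^{μᵢ x}` solve the adjoint equation
`λ φ - φ' - φ''' = 0`. For a solution `y` of the boundary value problem, the Lagrange identity
between `y` and `e^{μᵢ x}` gives `y''(L) e^{μᵢ L} = y''(0)`, and `y''(0) ≠ 0` by uniqueness for
the Cauchy problem. Pairing `y` with `x e^{μ x}` rules out a double root `μ`. Hence the roots are
distinct and the `e^{μᵢ L}` coincide, i.e. `μᵢ - μⱼ ∈ (2πi / L) ℤ`; together with `Σ μᵢ = 0` and
`Σ μᵢ μⱼ = 1` this is exactly `3 L² = 4π² (k² + k l + l²)`. Conversely, for such roots the cyclic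
sum `Σ (μⱼ - μₖ) e^{μᵢ x}` is a nonzero solution.
-/

namespace Rosier

theorem hasDerivAt_iteratedDeriv {𝕜 F : Type*} [NontriviallyNormedField 𝕜] [NormedAddCommGroup F]
    [NormedSpace 𝕜 F] {f : 𝕜 → F} {n : WithTop ℕ∞} (hf : ContDiff 𝕜 n f) {m : ℕ} (hm : m < n)
    (x : 𝕜) : HasDerivAt (iteratedDeriv m f) (iteratedDeriv (m + 1) f x) x := by
  rw [iteratedDeriv_succ]
  exact (hf.differentiable_iteratedDeriv m hm x).hasDerivAt

theorem eqOn_deriv_of_eqOn_Icc {F : Type*} [NormedAddCommGroup F] [NormedSpace ℝ F]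
    {f g : ℝ → F} {a b : ℝ} (hab : a < b) (hf : Differentiable ℝ f) (hg : Differentiable ℝ g)
    (h : EqOn f g (Icc a b)) : EqOn (deriv f) (deriv g) (Icc a b) := fun x hx => by
  have hu := uniqueDiffOn_Icc hab x hx
  rw [← (hf x).derivWithin hu, ← (hg x).derivWithin hu, derivWithin_congr h (h hx)]

theorem exists_ne_zero_of_iteratedDeriv_two_ne_zero {F : Type*} [NormedAddCommGroup F]
    [NormedSpace ℝ F] {f : ℝ → F} {a b : ℝ} (hab : a < b) (hf : ContDiff ℝ 2 f)
    (h : iteratedDeriv 2 f a ≠ 0) : ∃ x ∈ Icc a b, f x ≠ 0 := by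
  by_contra! hzero
  have h₁ : EqOn (deriv f) (deriv 0) (Icc a b) :=
    eqOn_deriv_of_eqOn_Icc hab (hf.differentiable (by norm_num)) (differentiable_const 0) hzero
  rw [deriv_zero, ← iteratedDeriv_one] at h₁
  have h₂ := eqOn_deriv_of_eqOn_Icc hab (hf.differentiable_iteratedDeriv' 1)
    (differentiable_const 0) h₁
  exact h (by simpa [iteratedDeriv_succ] using h₂ (left_mem_Icc.mpr hab.le))

theorem eqOn_zero_of_ode {lam : ℂ} {a b : ℝ} {y : ℝ → ℂ} (hy : ContDiff ℝ 3 y)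
    (hode : ∀ x ∈ Icc a b, lam * y x + deriv y x + iteratedDeriv 3 y x = 0)
    (h₀ : y a = 0) (h₁ : deriv y a = 0) (h₂ : iteratedDeriv 2 y a = 0) :
    EqOn y 0 (Icc a b) := by
  open ContinuousLinearMap in
  let A : ℂ × ℂ × ℂ →L[ℂ] ℂ × ℂ × ℂ :=
    ((fst ℂ ℂ ℂ).comp (snd ℂ ℂ _)).prod (((snd ℂ ℂ ℂ).comp (snd ℂ ℂ _)).prod
      ((-lam) • fst ℂ ℂ _ - (fst ℂ ℂ ℂ).comp (snd ℂ ℂ _)))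
  let Y : ℝ → ℂ × ℂ × ℂ := fun x => (iteratedDeriv 0 y x, iteratedDeriv 1 y x, iteratedDeriv 2 y x)
  have hY : ∀ x ∈ Icc a b, HasDerivAt Y (A (Y x)) x := fun x hx => by
    have h3 : iteratedDeriv 3 y x = -lam * y x - deriv y x := by linear_combination hode x hx
    have := (hasDerivAt_iteratedDeriv hy (m := 0) (by norm_num) x).prodMk
      ((hasDerivAt_iteratedDeriv hy (m := 1) (by norm_num) x).prodMk
        (hasDerivAt_iteratedDeriv hy (m := 2) (by norm_num) x))
    convert this using 1
    simp [A, Y, h3, iteratedDeriv_one]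
  have hYc : Continuous Y := (hy.continuous_iteratedDeriv 0 (by norm_num)).prodMk
    ((hy.continuous_iteratedDeriv 1 (by norm_num)).prodMk
      (hy.continuous_iteratedDeriv 2 (by norm_num)))
  have hEq := ODE_solution_unique (v := fun _ => A) (g := fun _ => 0) (fun _ => A.lipschitz)
    hYc.continuousOn (fun x hx => (hY x (Ico_subset_Icc_self hx)).hasDerivWithinAt)
    continuousOn_const (fun x _ => by simpa using (hasDerivWithinAt_const x _ (0 : ℂ × ℂ × ℂ)))
    (by simp [Y, h₀, h₁, h₂])
  exact fun x hx => congrArg Prod.fst (hEq hx)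

-- The boundary term in `∫ (λ y + y' + y''') φ = ∫ y (λ φ - φ' - φ''') + [lagrangeForm y φ]`.
noncomputable def lagrangeForm (y φ : ℝ → ℂ) (x : ℝ) : ℂ :=
  iteratedDeriv 2 y x * φ x - deriv y x * deriv φ x + y x * (iteratedDeriv 2 φ x + φ x)

theorem hasDerivAt_lagrangeForm {y φ : ℝ → ℂ} (hy : ContDiff ℝ 3 y) (hφ : ContDiff ℝ 3 φ)
    (x : ℝ) : HasDerivAt (lagrangeForm y φ)
      ((iteratedDeriv 3 y x + deriv y x) * φ x + y x * (iteratedDeriv 3 φ x + deriv φ x)) x := by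
  have dy0 := hasDerivAt_iteratedDeriv hy (m := 0) (by norm_num) x
  have dy1 := hasDerivAt_iteratedDeriv hy (m := 1) (by norm_num) x
  have dy2 := hasDerivAt_iteratedDeriv hy (m := 2) (by norm_num) x
  have dφ0 := hasDerivAt_iteratedDeriv hφ (m := 0) (by norm_num) x
  have dφ1 := hasDerivAt_iteratedDeriv hφ (m := 1) (by norm_num) x
  have dφ2 := hasDerivAt_iteratedDeriv hφ (m := 2) (by norm_num) x
  simp only [iteratedDeriv_zero, iteratedDeriv_one, Nat.reduceAdd] at dy0 dy1 dy2 dφ0 dφ1 dφ2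
  refine (((dy2.mul dφ0).sub (dy1.mul dφ1)).add (dy0.mul (dφ2.add dφ0))).congr_deriv ?_
  simp only [Pi.add_apply]
  ring

theorem lagrangeForm_eq {lam : ℂ} {a b : ℝ} (hab : a ≤ b) {y φ : ℝ → ℂ} (hy : ContDiff ℝ 3 y)
    (hφ : ContDiff ℝ 3 φ) (hy_ode : ∀ x ∈ Icc a b, lam * y x + deriv y x + iteratedDeriv 3 y x = 0)
    (hφ_ode : ∀ x ∈ Icc a b, lam * φ x - deriv φ x - iteratedDeriv 3 φ x = 0) :
    lagrangeForm y φ b = lagrangeForm y φ a := by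
  refine constant_of_has_deriv_right_zero
    (fun x _ => (hasDerivAt_lagrangeForm hy hφ x).continuousAt.continuousWithinAt) (fun x hx => ?_)
    b (right_mem_Icc.mpr hab)
  convert (hasDerivAt_lagrangeForm hy hφ x).hasDerivWithinAt using 1
  have hx' := Ico_subset_Icc_self hx
  linear_combination -(φ x * hy_ode x hx') + y x * hφ_ode x hx'

open Complex

noncomputable def linExp (p q r : ℂ) (x : ℝ) : ℂ := (p + q * x) * cexp (r * x)

theorem hasDerivAt_linExp (p q r : ℂ) (x : ℝ) :
    HasDerivAt (linExp p q r) (linExp (q + r * p) (r * q) r x) x := by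
  have hx : HasDerivAt (fun x : ℝ => (x : ℂ)) 1 x := ofRealCLM.hasDerivAt
  refine (((hx.const_mul q).const_add p).mul (hx.const_mul r).cexp).congr_deriv ?_
  simp only [linExp]
  ring

theorem deriv_linExp (p q r : ℂ) : deriv (linExp p q r) = linExp (q + r * p) (r * q) r :=
  funext fun x => (hasDerivAt_linExp p q r x).deriv

theorem contDiff_linExp (p q r : ℂ) {n : WithTop ℕ∞} : ContDiff ℝ n (linExp p q r) := by
  have : ContDiff ℝ n ((↑) : ℝ → ℂ) := ofRealCLM.contDiff
  unfold linExp
  fun_prop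

theorem linExp_zero (p q r : ℂ) : linExp p q r 0 = p := by simp [linExp]

-- `(3 r² + 1) q = 0`: the linear factor is allowed only when `r` is a double root.
theorem linExp_adjoint_ode {lam p q r : ℂ} (hr : r ^ 3 + r = lam) (hq : (3 * r ^ 2 + 1) * q = 0)
    (x : ℝ) :
    lam * linExp p q r x - deriv (linExp p q r) x - iteratedDeriv 3 (linExp p q r) x = 0 := by
  simp only [iteratedDeriv_succ, iteratedDeriv_zero, deriv_linExp, linExp]
  linear_combination (-(p + q * x) * cexp (r * x)) * hr - cexp (r * x) * hq

noncomputable def expSum {ι : Type*} [Fintype ι] (A μ : ι → ℂ) (x : ℝ) : ℂ :=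
  ∑ i, A i * cexp (μ i * x)

theorem hasDerivAt_expSum {ι : Type*} [Fintype ι] (A μ : ι → ℂ) (x : ℝ) :
    HasDerivAt (expSum A μ) (expSum (A * μ) μ x) x := by
  have hx : HasDerivAt (fun x : ℝ => (x : ℂ)) 1 x := ofRealCLM.hasDerivAt
  refine (HasDerivAt.fun_sum fun i _ => ((hx.const_mul (μ i)).cexp.const_mul (A i))).congr_deriv ?_
  simp only [expSum, Pi.mul_apply]
  congr 1; ext i; ring

theorem deriv_expSum {ι : Type*} [Fintype ι] (A μ : ι → ℂ) :
    deriv (expSum A μ) = expSum (A * μ) μ :=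
  funext fun x => (hasDerivAt_expSum A μ x).deriv

theorem iteratedDeriv_expSum {ι : Type*} [Fintype ι] (A μ : ι → ℂ) (n : ℕ) :
    iteratedDeriv n (expSum A μ) = expSum (A * μ ^ n) μ := by
  induction n with
  | zero => simp
  | succ n ih => rw [iteratedDeriv_succ, ih, deriv_expSum, pow_succ, mul_assoc]

theorem contDiff_expSum {ι : Type*} [Fintype ι] (A μ : ι → ℂ) {n : WithTop ℕ∞} :
    ContDiff ℝ n (expSum A μ) := by
  have : ContDiff ℝ n ((↑) : ℝ → ℂ) := ofRealCLM.contDiff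
  unfold expSum
  fun_prop

open Polynomial in
theorem exists_vieta (c : ℂ) : ∃ μ₁ μ₂ μ₃ : ℂ,
    μ₁ + μ₂ + μ₃ = 0 ∧ μ₁ * μ₂ + μ₁ * μ₃ + μ₂ * μ₃ = 1 ∧ μ₁ * μ₂ * μ₃ = c := by
  have hdeg : (X ^ 3 + X - C c : ℂ[X]).degree = 3 := by compute_degree!
  obtain ⟨μ, hμ⟩ := Complex.exists_root (by rw [hdeg]; norm_num)
  replace hμ : μ ^ 3 + μ - c = 0 := by simpa using hμ
  obtain ⟨d, hd⟩ := IsAlgClosed.exists_pow_nat_eq (-3 * μ ^ 2 - 4 : ℂ) (n := 2) (by norm_num)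
  exact ⟨μ, (-μ + d) / 2, (-μ - d) / 2, by ring, by linear_combination (-1/4 : ℂ) * hd,
    by linear_combination hμ + (-μ/4) * hd⟩

/-- `sum_eq_zero` and `pair_sum_eq_one` say that `μ₁, μ₂, μ₃` are the roots of
`X³ + X - μ₁ μ₂ μ₃`. -/
structure IsResonantTriple (L : ℝ) (μ₁ μ₂ μ₃ : ℂ) : Prop where
  ne₁₂ : μ₁ ≠ μ₂
  ne₁₃ : μ₁ ≠ μ₃
  ne₂₃ : μ₂ ≠ μ₃
  sum_eq_zero : μ₁ + μ₂ + μ₃ = 0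
  pair_sum_eq_one : μ₁ * μ₂ + μ₁ * μ₃ + μ₂ * μ₃ = 1
  exp_eq₁₂ : cexp (μ₁ * L) = cexp (μ₂ * L)
  exp_eq₁₃ : cexp (μ₁ * L) = cexp (μ₃ * L)

section BoundaryValueProblem

variable {lam : ℂ} {L : ℝ} {y : ℝ → ℂ}

theorem iteratedDeriv_two_mul_linExp_eq (hL : 0 ≤ L) (hy : ContDiff ℝ 3 y)
    (hode : ∀ x ∈ Icc 0 L, lam * y x + deriv y x + iteratedDeriv 3 y x = 0)
    (h₀ : y 0 = 0) (h₀' : deriv y 0 = 0) (hL₀ : y L = 0) (hL' : deriv y L = 0)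
    (p : ℂ) {q r : ℂ} (hr : r ^ 3 + r = lam) (hq : (3 * r ^ 2 + 1) * q = 0) :
    iteratedDeriv 2 y L * linExp p q r L = iteratedDeriv 2 y 0 * p := by
  have := lagrangeForm_eq hL hy (contDiff_linExp p q r) hode fun x _ => linExp_adjoint_ode hr hq x
  simpa [lagrangeForm, h₀, h₀', hL₀, hL', linExp_zero] using this

theorem exists_isResonantTriple_of_solution (hL : 0 < L) (hy : ContDiff ℝ 3 y)
    (hne : ∃ x ∈ Icc 0 L, y x ≠ 0)
    (hode : ∀ x ∈ Icc 0 L, lam * y x + deriv y x + iteratedDeriv 3 y x = 0)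
    (h₀ : y 0 = 0) (h₀' : deriv y 0 = 0) (hL₀ : y L = 0) (hL' : deriv y L = 0) :
    ∃ μ₁ μ₂ μ₃, IsResonantTriple L μ₁ μ₂ μ₃ := by
  have hc : iteratedDeriv 2 y 0 ≠ 0 := fun h => by
    obtain ⟨x, hx, hyx⟩ := hne
    exact hyx (eqOn_zero_of_ode hy hode h₀ h₀' h hx)
  have key := iteratedDeriv_two_mul_linExp_eq hL.le hy hode h₀ h₀' hL₀ hL'
  have hexp (r : ℂ) (hr : r ^ 3 + r = lam) :
      iteratedDeriv 2 y L * cexp (r * L) = iteratedDeriv 2 y 0 := by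
    simpa [linExp] using key 1 hr (mul_zero _)
  obtain ⟨μ₁, μ₂, μ₃, hs, he, hp⟩ := exists_vieta lam
  have h₁ : μ₁ ^ 3 + μ₁ = lam := by linear_combination μ₁ ^ 2 * hs - μ₁ * he + hp
  have h₂ : μ₂ ^ 3 + μ₂ = lam := by linear_combination μ₂ ^ 2 * hs - μ₂ * he + hp
  have h₃ : μ₃ ^ 3 + μ₃ = lam := by linear_combination μ₃ ^ 2 * hs - μ₃ * he + hp
  have hd : iteratedDeriv 2 y L ≠ 0 := fun h => hc (by simpa [h] using (hexp μ₁ h₁).symm)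
  have hsimple (r : ℂ) (hr : r ^ 3 + r = lam) : 3 * r ^ 2 + 1 ≠ 0 := fun hr' => by
    have := key 0 (q := 1) hr (by rw [hr', zero_mul])
    simp [linExp, hd, hL.ne', Complex.exp_ne_zero] at this
  refine ⟨μ₁, μ₂, μ₃, ⟨fun h => hsimple μ₁ h₁ ?_, fun h => hsimple μ₁ h₁ ?_,
    fun h => hsimple μ₂ h₂ ?_, hs, he, ?_, ?_⟩⟩
  · linear_combination -he + (μ₁ + μ₂) * hs + (2 * μ₁ + μ₂) * h
  · linear_combination -he + (μ₁ + μ₃) * hs + (2 * μ₁ + μ₃) * h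
  · linear_combination -he + (μ₂ + μ₃) * hs + (2 * μ₂ + μ₃) * h
  · exact mul_left_cancel₀ hd ((hexp μ₁ h₁).trans (hexp μ₂ h₂).symm)
  · exact mul_left_cancel₀ hd ((hexp μ₁ h₁).trans (hexp μ₃ h₃).symm)

end BoundaryValueProblem

theorem IsResonantTriple.exists_solution {L : ℝ} {μ₁ μ₂ μ₃ : ℂ} (h : IsResonantTriple L μ₁ μ₂ μ₃)
    (hL : 0 < L) :
    ∃ lam : ℂ, ∃ y : ℝ → ℂ, ContDiff ℝ 3 y ∧ (∃ x ∈ Icc 0 L, y x ≠ 0) ∧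
      (∀ x ∈ Icc 0 L, lam * y x + deriv y x + iteratedDeriv 3 y x = 0) ∧
      y 0 = 0 ∧ deriv y 0 = 0 ∧ y L = 0 ∧ deriv y L = 0 := by
  have hs := h.sum_eq_zero
  have he := h.pair_sum_eq_one
  refine ⟨-(μ₁ * μ₂ * μ₃), expSum ![μ₂ - μ₃, μ₃ - μ₁, μ₁ - μ₂] ![μ₁, μ₂, μ₃], contDiff_expSum _ _,
    exists_ne_zero_of_iteratedDeriv_two_ne_zero hL (contDiff_expSum _ _) ?_,
    fun x _ => ?_, ?_, ?_, ?_, ?_⟩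
  all_goals simp only [deriv_expSum, iteratedDeriv_expSum, expSum, Pi.mul_apply, Pi.pow_apply,
    Fin.sum_univ_three, Matrix.cons_val_zero, Matrix.cons_val_one, Matrix.cons_val, ofReal_zero,
    mul_zero, Complex.exp_zero, mul_one, ← h.exp_eq₁₂, ← h.exp_eq₁₃]
  · rw [show (μ₂ - μ₃) * μ₁ ^ 2 + (μ₃ - μ₁) * μ₂ ^ 2 + (μ₁ - μ₂) * μ₃ ^ 2 =
        -((μ₁ - μ₂) * (μ₂ - μ₃) * (μ₃ - μ₁)) by ring]
    exact neg_ne_zero.mpr (mul_ne_zero (mul_ne_zero (sub_ne_zero.mpr h.ne₁₂)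
      (sub_ne_zero.mpr h.ne₂₃)) (sub_ne_zero.mpr h.ne₁₃.symm))
  · linear_combination (μ₂ - μ₃) * cexp (μ₁ * x) * (μ₁ ^ 2 * hs - μ₁ * he) +
      (μ₃ - μ₁) * cexp (μ₂ * x) * (μ₂ ^ 2 * hs - μ₂ * he) +
      (μ₁ - μ₂) * cexp (μ₃ * x) * (μ₃ ^ 2 * hs - μ₃ * he)
  all_goals ring

theorem isCriticalLength_iff {L : ℝ} (hL : 0 < L) : IsCriticalLength L ↔
    ∃ k l : ℕ, 1 ≤ k ∧ 1 ≤ l ∧ 3 * L ^ 2 = (2 * π) ^ 2 * ((k : ℝ) ^ 2 + (l : ℝ) ^ 2 + k * l) := by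
  refine exists₂_congr fun k l => and_congr_right' <| and_congr_right' ?_
  have hπ : 0 < 2 * π := by positivity
  rw [eq_comm, mul_comm, ← eq_div_iff hπ.ne',
    Real.sqrt_eq_iff_eq_sq (by positivity) (by positivity)]
  constructor <;> intro h
  · field_simp at h ⊢; linarith
  · field_simp at h ⊢; linarith

theorem exists_nat_sq_add_sq_add_mul_eq {m n : ℤ} (hm : m ≠ 0) (hn : n ≠ 0) (hmn : m ≠ n) :
    ∃ k l : ℕ, 1 ≤ k ∧ 1 ≤ l ∧ (k : ℤ) ^ 2 + (l : ℤ) ^ 2 + k * l = m ^ 2 - m * n + n ^ 2 := by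
  have of_neg (a b : ℤ) (hab : a * b < 0) :
      ∃ k l : ℕ, 1 ≤ k ∧ 1 ≤ l ∧ (k : ℤ) ^ 2 + (l : ℤ) ^ 2 + k * l = a ^ 2 - a * b + b ^ 2 := by
    refine ⟨a.natAbs, b.natAbs, ?_, ?_, ?_⟩
    · exact Int.natAbs_pos.mpr (left_ne_zero_of_mul hab.ne)
    · exact Int.natAbs_pos.mpr (right_ne_zero_of_mul hab.ne)
    · rw [Int.natCast_natAbs, Int.natCast_natAbs, sq_abs, sq_abs, ← abs_mul, abs_of_neg hab]
      ring
  -- The form `a² - ab + b²` takes the same value at `(m, n)`, `(m, m - n)` and `(n - m, n)`, and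
  -- one of these pairs has coordinates of opposite signs.
  rcases lt_or_ge (m * n) 0 with h₁ | h₁
  · exact of_neg m n h₁
  rcases lt_or_ge (m * (m - n)) 0 with h₂ | h₂
  · simpa only [show m ^ 2 - m * (m - n) + (m - n) ^ 2 = m ^ 2 - m * n + n ^ 2 by ring]
      using of_neg m (m - n) h₂
  · have h₃ : (n - m) * n < 0 := by
      have hpos : 0 < m * n * (m - n) ^ 2 :=
        mul_pos (h₁.lt_of_ne' (mul_ne_zero hm hn)) (by positivity)
      by_contra! h
      nlinarith [mul_nonneg h₂ h]
    simpa only [show (n - m) ^ 2 - (n - m) * n + n ^ 2 = m ^ 2 - m * n + n ^ 2 by ring]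
      using of_neg (n - m) n h₃

theorem IsResonantTriple.exists_int {L : ℝ} {μ₁ μ₂ μ₃ : ℂ} (h : IsResonantTriple L μ₁ μ₂ μ₃)
    (hL : L ≠ 0) : ∃ m n : ℤ, m ≠ 0 ∧ n ≠ 0 ∧ m ≠ n ∧
      3 * L ^ 2 = (2 * π) ^ 2 * ((m : ℝ) ^ 2 - m * n + (n : ℝ) ^ 2) := by
  have hL' : (L : ℂ) ≠ 0 := ofReal_ne_zero.mpr hL
  obtain ⟨m, hm⟩ := exp_eq_exp_iff_exists_int.mp h.exp_eq₁₂
  obtain ⟨n, hn⟩ := exp_eq_exp_iff_exists_int.mp h.exp_eq₁₃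
  refine ⟨m, n, ?_, ?_, ?_, ?_⟩
  · rintro rfl
    exact h.ne₁₂ (mul_right_cancel₀ hL' (by simpa using hm))
  · rintro rfl
    exact h.ne₁₃ (mul_right_cancel₀ hL' (by simpa using hn))
  · rintro rfl
    exact h.ne₂₃ (mul_right_cancel₀ hL' (by linear_combination hn - hm))
  · have hsq : (μ₁ - μ₂) ^ 2 + (μ₁ - μ₃) ^ 2 + (μ₂ - μ₃) ^ 2 = -6 := by
      linear_combination (2 * (μ₁ + μ₂ + μ₃)) * h.sum_eq_zero - 6 * h.pair_sum_eq_one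
    set τ : ℂ := 2 * π * I with hτ
    have hτ2 : τ ^ 2 = -(2 * π) ^ 2 := by rw [hτ]; linear_combination (2 * π) ^ 2 * I_sq
    have hu : (μ₁ - μ₂) * L = m * τ := by linear_combination hm
    have hv : (μ₁ - μ₃) * L = n * τ := by linear_combination hn
    have key : (m * τ) ^ 2 + (n * τ) ^ 2 + (n * τ - m * τ) ^ 2 = -6 * (L : ℂ) ^ 2 := by
      rw [← hu, ← hv]
      linear_combination (L : ℂ) ^ 2 * hsq
    have : (3 * L ^ 2 : ℂ) = (2 * π) ^ 2 * ((m : ℂ) ^ 2 - m * n + (n : ℂ) ^ 2) := by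
      linear_combination (1 / 2 : ℂ) * key - ((m : ℂ) ^ 2 - m * n + (n : ℂ) ^ 2) * hτ2
    exact_mod_cast this

theorem IsResonantTriple.isCriticalLength {L : ℝ} {μ₁ μ₂ μ₃ : ℂ}
    (h : IsResonantTriple L μ₁ μ₂ μ₃) (hL : 0 < L) : IsCriticalLength L := by
  obtain ⟨m, n, hm, hn, hmn, hL'⟩ := h.exists_int hL.ne'
  obtain ⟨k, l, hk, hl, hkl⟩ := exists_nat_sq_add_sq_add_mul_eq hm hn hmn
  have hkl' : (k : ℝ) ^ 2 + (l : ℝ) ^ 2 + k * l = (m : ℝ) ^ 2 - m * n + (n : ℝ) ^ 2 := by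
    exact_mod_cast hkl
  exact (isCriticalLength_iff hL).mpr ⟨k, l, hk, hl, by rw [hL', hkl']⟩

theorem exists_isResonantTriple_of_isCriticalLength {L : ℝ} (hL : 0 < L)
    (h : IsCriticalLength L) : ∃ μ₁ μ₂ μ₃, IsResonantTriple L μ₁ μ₂ μ₃ := by
  obtain ⟨k, l, hk, hl, hkl⟩ := (isCriticalLength_iff hL).mp h
  have hL' : (L : ℂ) ≠ 0 := ofReal_ne_zero.mpr hL.ne'
  have hkl' : (3 * L ^ 2 : ℂ) = (2 * π) ^ 2 * ((k : ℂ) ^ 2 + (l : ℂ) ^ 2 + k * l) := by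
    exact_mod_cast congrArg ((↑) : ℝ → ℂ) hkl
  -- The roots are `ω ν` with `ω L = 2πi` and `ν` summing to zero with integer gaps `k` and `l`.
  set ω : ℂ := 2 * π * I / L with hω
  have hωL : ω * L = 2 * π * I := div_mul_cancel₀ _ hL'
  have hω0 : ω ≠ 0 := div_ne_zero (by simp [pi_ne_zero, I_ne_zero]) hL'
  set ν : ℂ := (k - l) / 3 with hν
  refine ⟨ω * (ν - k), ω * ν, ω * (ν + l), ⟨?_, ?_, ?_, by ring, ?_,
    exp_eq_exp_iff_exists_int.mpr ⟨-k, ?_⟩, exp_eq_exp_iff_exists_int.mpr ⟨-(k + l), ?_⟩⟩⟩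
  · refine (mul_right_injective₀ hω0).ne fun h => ?_
    have : (k : ℂ) = 0 := by linear_combination -h
    norm_cast at this; omega
  · refine (mul_right_injective₀ hω0).ne fun h => ?_
    have : ((k + l : ℕ) : ℂ) = 0 := by push_cast; linear_combination -h
    norm_cast at this; omega
  · refine (mul_right_injective₀ hω0).ne fun h => ?_
    have : (l : ℂ) = 0 := by linear_combination -h
    norm_cast at this; omega
  · rw [hν, hω]
    field_simp
    linear_combination (-3 : ℂ) * hkl' - 12 * π ^ 2 * ((k : ℂ) ^ 2 + (l : ℂ) ^ 2 + k * l) * I_sq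
  · push_cast
    linear_combination (-(k : ℂ)) * hωL
  · push_cast
    linear_combination (-((k : ℂ) + l)) * hωL

end Rosier

theorem stmt9 (L : ℝ) (hL : 0 < L) :
    (∃ lam : ℂ, ∃ y : ℝ → ℂ, ContDiff ℝ 3 y ∧ (∃ x ∈ Set.Icc (0:ℝ) L, y x ≠ 0) ∧
      (∀ x ∈ Set.Icc (0:ℝ) L, lam * y x + deriv y x + iteratedDeriv 3 y x = 0) ∧
      y 0 = 0 ∧ deriv y 0 = 0 ∧ y L = 0 ∧ deriv y L = 0)
    ↔ IsCriticalLength L := by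
  constructor
  · rintro ⟨lam, y, hy, hne, hode, h₀, h₀', hL₀, hL'⟩
    obtain ⟨μ₁, μ₂, μ₃, h⟩ :=
      Rosier.exists_isResonantTriple_of_solution hL hy hne hode h₀ h₀' hL₀ hL'
    exact h.isCriticalLength hL
  · intro h
    obtain ⟨μ₁, μ₂, μ₃, h⟩ := Rosier.exists_isResonantTriple_of_isCriticalLength hL h
    exact h.exists_solution hL
end

section
/- Let ℓ_1,...,ℓ_N > 0 and let 𝒩 = { 2π √((k² + l² + kl)/3) : k, l ∈ ℕ* }. The following are equivalent: (i) there exist λ_1,...,λ_N ∈ ℂ and a nonzero y = (y_1,...,y_N) with y_i ∈ H^3(0,ℓ_i) satisfying λ_i y_i + y_i' + y_i''' = 0, y_i(ℓ_i) = y_i'(ℓ_i) = 0, y_i(0) = y_i'(0) = 0 for all i, and Σ_{i=1}^N y_i''(0) = 0; (ii) at least two of the lengths ℓ_1,...,ℓ_N belong to 𝒩. -/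
/-
On one edge a solution of `λy + y' + y''' = 0` is determined by its jet `(y, y', y'')(0)`, so one
with `y(0) = y'(0) = 0` is `y''(0)` times an explicit exponential solution built from the roots of
`z³ + z + λ`. At a double root `y(L) = 0` already forces `y''(0) = 0`, because `|1 - 3μL| > 1` for
the purely imaginary root `μ`. With simple roots `μ₁, μ₂, μ₃`, the conditions `y(L) = y'(L) = 0`
with `y''(0) ≠ 0` say exactly `e^{μ₁L} = e^{μ₂L} = e^{μ₃L}`, i.e. `μ₁ - μ₂ = 2πin/L` and
`μ₁ - μ₃ = 2πim/L`; since `μ₁ + μ₂ + μ₃ = 0` and `μ₁μ₂ + μ₁μ₃ + μ₂μ₃ = 1`, this becomes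
`3L² = 4π²(n² - nm + m²)`, which is Rosier's condition `L ∈ 𝒩`.

On the star, `yᵢ ≢ 0` iff `yᵢ''(0) ≠ 0`, so the Kirchhoff condition `∑ yᵢ''(0) = 0` needs two
nonzero edges, both of critical length; conversely two critical edges carry Rosier
eigenfunctions with `y''(0) = 1` and `y''(0) = -1`.
-/

open scoped BigOperators
open MeasureTheory intervalIntegral Real Set

open Complex

theorem deriv_eq_of_eqOn_Icc {E : Type*} [NormedAddCommGroup E] [NormedSpace ℝ E] {f g : ℝ → E}
    {a b x : ℝ} (hab : a < b) (h : EqOn f g (Icc a b)) (hx : x ∈ Icc a b)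
    (hf : DifferentiableAt ℝ f x) (hg : DifferentiableAt ℝ g x) : deriv f x = deriv g x := by
  rw [← hf.derivWithin (uniqueDiffOn_Icc hab x hx), ← hg.derivWithin (uniqueDiffOn_Icc hab x hx),
    derivWithin_congr h (h hx)]

theorem eqOn_iteratedDeriv_of_eqOn_Icc {E : Type*} [NormedAddCommGroup E] [NormedSpace ℝ E]
    {f g : ℝ → E} {a b : ℝ} {n k : ℕ} (hab : a < b) (hf : ContDiff ℝ n f) (hg : ContDiff ℝ n g)
    (h : EqOn f g (Icc a b)) (hk : k ≤ n) :
    EqOn (iteratedDeriv k f) (iteratedDeriv k g) (Icc a b) := by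
  induction k with
  | zero => simpa using h
  | succ k ih =>
    intro x hx
    rw [iteratedDeriv_succ, iteratedDeriv_succ]
    have hkn : (k : WithTop ℕ∞) < n := by exact_mod_cast hk
    exact deriv_eq_of_eqOn_Icc hab (ih (by omega)) hx
      (hf.differentiable_iteratedDeriv k hkn x) (hg.differentiable_iteratedDeriv k hkn x)

theorem hasDerivAt_iteratedDeriv {𝕜 F : Type*} [NontriviallyNormedField 𝕜] [NormedAddCommGroup F]
    [NormedSpace 𝕜 F] {f : 𝕜 → F} {n k : ℕ} (hf : ContDiff 𝕜 n f) (hk : k < n) (x : 𝕜) :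
    HasDerivAt (iteratedDeriv k f) (iteratedDeriv (k + 1) f x) x := by
  rw [iteratedDeriv_succ]
  exact (hf.differentiable_iteratedDeriv k (by exact_mod_cast hk) x).hasDerivAt

def SolvesKdV (lam : ℂ) (L : ℝ) (y : ℝ → ℂ) : Prop :=
  ∀ x ∈ Icc 0 L, lam * y x + deriv y x + iteratedDeriv 3 y x = 0

noncomputable def kdvCompanion (lam : ℂ) : (ℂ × ℂ × ℂ) →L[ℝ] ℂ × ℂ × ℂ :=
  LinearMap.toContinuousLinearMap
    { toFun := fun u => (u.2.1, u.2.2, -u.2.1 - lam * u.1)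
      map_add' := fun u v => Prod.ext rfl <| Prod.ext rfl <| by
        simp only [Prod.fst_add, Prod.snd_add]
        ring
      map_smul' := fun r u => Prod.ext rfl <| Prod.ext rfl <| by
        simp only [Prod.smul_fst, Prod.smul_snd, real_smul, RingHom.id_apply]
        ring }

theorem kdvCompanion_apply (lam : ℂ) (u : ℂ × ℂ × ℂ) :
    kdvCompanion lam u = (u.2.1, u.2.2, -u.2.1 - lam * u.1) :=
  rfl

theorem hasDerivAt_jet_of_solvesKdV {lam : ℂ} {L : ℝ} {y : ℝ → ℂ} (hy : ContDiff ℝ 3 y)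
    (hsol : SolvesKdV lam L y) {t : ℝ} (ht : t ∈ Icc 0 L) :
    HasDerivAt (fun t => (y t, deriv y t, iteratedDeriv 2 y t))
      (kdvCompanion lam (y t, deriv y t, iteratedDeriv 2 y t)) t := by
  have h0 := hasDerivAt_iteratedDeriv (k := 0) hy (by norm_num) t
  have h1 := hasDerivAt_iteratedDeriv (k := 1) hy (by norm_num) t
  have h2 := hasDerivAt_iteratedDeriv (k := 2) hy (by norm_num) t
  simp only [iteratedDeriv_zero, iteratedDeriv_one, zero_add] at h0 h1
  convert h0.prodMk (h1.prodMk h2) using 1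
  rw [kdvCompanion_apply]
  refine Prod.ext rfl (Prod.ext rfl ?_)
  linear_combination -hsol t ht

theorem SolvesKdV.eqOn {lam : ℂ} {L : ℝ} {f g : ℝ → ℂ} (hf : ContDiff ℝ 3 f) (hg : ContDiff ℝ 3 g)
    (hfs : SolvesKdV lam L f) (hgs : SolvesKdV lam L g) (h0 : f 0 = g 0)
    (h1 : deriv f 0 = deriv g 0) (h2 : iteratedDeriv 2 f 0 = iteratedDeriv 2 g 0) :
    EqOn f g (Icc 0 L) := by
  have hjet := ODE_solution_unique (v := fun _ => kdvCompanion lam)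
    (fun _ => (kdvCompanion lam).lipschitz)
    (HasDerivAt.continuousOn fun t ht => hasDerivAt_jet_of_solvesKdV hf hfs ht)
    (fun t ht => (hasDerivAt_jet_of_solvesKdV hf hfs (Ico_subset_Icc_self ht)).hasDerivWithinAt)
    (HasDerivAt.continuousOn fun t ht => hasDerivAt_jet_of_solvesKdV hg hgs ht)
    (fun t ht => (hasDerivAt_jet_of_solvesKdV hg hgs (Ico_subset_Icc_self ht)).hasDerivWithinAt)
    (by simp [h0, h1, h2])
  exact fun t ht => congrArg Prod.fst (hjet ht)

theorem SolvesKdV.boundary_eq {lam : ℂ} {L : ℝ} {f g : ℝ → ℂ} (hL : 0 < L) (hf : ContDiff ℝ 3 f)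
    (hg : ContDiff ℝ 3 g) (hfs : SolvesKdV lam L f) (hgs : SolvesKdV lam L g) (h0 : f 0 = g 0)
    (h1 : deriv f 0 = deriv g 0) (h2 : iteratedDeriv 2 f 0 = iteratedDeriv 2 g 0) :
    f L = g L ∧ deriv f L = deriv g L := by
  have h := hfs.eqOn hf hg hgs h0 h1 h2
  have hL' : L ∈ Icc 0 L := right_mem_Icc.2 hL.le
  simpa using
    And.intro (h hL') (eqOn_iteratedDeriv_of_eqOn_Icc (k := 1) hL hf hg h (by norm_num) hL')

section ExpPoly

variable {ι : Type*} [Fintype ι]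

noncomputable def expPoly (a b μ : ι → ℂ) (x : ℝ) : ℂ :=
  ∑ j, (a j + b j * x) * cexp (μ j * x)

theorem hasDerivAt_expPoly (a b μ : ι → ℂ) (x : ℝ) :
    HasDerivAt (expPoly a b μ) (expPoly (a * μ + b) (b * μ) μ x) x := by
  have hx : HasDerivAt (fun x : ℝ => (x : ℂ)) 1 x := by
    simpa using (hasDerivAt_id x).ofReal_comp
  have hterm (j : ι) : HasDerivAt (fun x : ℝ => (a j + b j * x) * cexp (μ j * x))
      ((a j * μ j + b j + b j * μ j * x) * cexp (μ j * x)) x := by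
    refine (((hx.const_mul (b j)).const_add (a j)).fun_mul (hx.const_mul (μ j)).cexp).congr_deriv ?_
    ring
  unfold expPoly
  simpa using HasDerivAt.fun_sum fun j _ => hterm j

theorem contDiff_expPoly (a b μ : ι → ℂ) {n : WithTop ℕ∞} : ContDiff ℝ n (expPoly a b μ) := by
  have : ContDiff ℝ n (fun x : ℝ => (x : ℂ)) := ofRealCLM.contDiff
  unfold expPoly
  fun_prop

theorem deriv_expPoly (a b μ : ι → ℂ) :
    deriv (expPoly a b μ) = expPoly (a * μ + b) (b * μ) μ :=
  funext fun x => (hasDerivAt_expPoly a b μ x).deriv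

theorem iteratedDeriv_two_expPoly (a b μ : ι → ℂ) :
    iteratedDeriv 2 (expPoly a b μ) = expPoly (a * μ ^ 2 + 2 * b * μ) (b * μ ^ 2) μ := by
  rw [iteratedDeriv_succ, iteratedDeriv_one, deriv_expPoly, deriv_expPoly]
  congr 1 <;> ring

theorem iteratedDeriv_three_expPoly (a b μ : ι → ℂ) :
    iteratedDeriv 3 (expPoly a b μ) = expPoly (a * μ ^ 3 + 3 * b * μ ^ 2) (b * μ ^ 3) μ := by
  rw [iteratedDeriv_succ, iteratedDeriv_two_expPoly, deriv_expPoly]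
  congr 1 <;> ring

theorem expPoly_zero (a b μ : ι → ℂ) : expPoly a b μ 0 = ∑ j, a j := by
  simp [expPoly]

theorem solvesKdV_expPoly {a b μ : ι → ℂ} {lam : ℂ} (hμ : ∀ j, μ j ^ 3 + μ j + lam = 0)
    (hb : ∀ j, b j * (3 * μ j ^ 2 + 1) = 0) (L : ℝ) : SolvesKdV lam L (expPoly a b μ) := by
  intro x _
  rw [deriv_expPoly, iteratedDeriv_three_expPoly]
  simp only [expPoly, Finset.mul_sum, ← Finset.sum_add_distrib]
  refine Finset.sum_eq_zero fun j _ => ?_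
  simp only [Pi.add_apply, Pi.mul_apply, Pi.pow_apply, Pi.ofNat_apply]
  linear_combination (a j + b j * x) * cexp (μ j * x) * hμ j + cexp (μ j * x) * hb j

end ExpPoly

open Polynomial in
theorem exists_vieta_roots (lam : ℂ) : ∃ μ₁ μ₂ μ₃ : ℂ,
    μ₁ + μ₂ + μ₃ = 0 ∧ μ₁ * μ₂ + μ₁ * μ₃ + μ₂ * μ₃ = 1 ∧ μ₁ * μ₂ * μ₃ = -lam := by
  obtain ⟨μ, hμ⟩ : ∃ μ : ℂ, μ ^ 3 + μ + lam = 0 := by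
    have hdeg : (X ^ 3 + X + C lam : ℂ[X]).degree ≠ 0 := by
      rw [show (X ^ 3 + X + C lam : ℂ[X]).degree = 3 by compute_degree!]
      decide
    obtain ⟨μ, hμ⟩ := IsAlgClosed.exists_root _ hdeg
    exact ⟨μ, by simpa using hμ⟩
  obtain ⟨s, hs⟩ := IsAlgClosed.exists_pow_nat_eq (-3 * μ ^ 2 - 4) two_pos
  exact ⟨μ, (-μ + s) / 2, (-μ - s) / 2, by ring, by linear_combination -hs / 4,
    by linear_combination -μ * hs / 4 + hμ⟩

theorem exists_double_root_or_simple_roots (lam : ℂ) :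
    (∃ μ : ℂ, μ ^ 3 + μ + lam = 0 ∧ 3 * μ ^ 2 + 1 = 0) ∨
      ∃ μ₁ μ₂ μ₃ : ℂ, μ₁ ≠ μ₂ ∧ μ₁ ≠ μ₃ ∧ μ₂ ≠ μ₃ ∧ μ₁ + μ₂ + μ₃ = 0 ∧
        μ₁ * μ₂ + μ₁ * μ₃ + μ₂ * μ₃ = 1 ∧ lam = -(μ₁ * μ₂ * μ₃) := by
  obtain ⟨μ₁, μ₂, μ₃, h₁, h₂, h₃⟩ := exists_vieta_roots lam
  by_cases hd : (3 * μ₁ ^ 2 + 1) * (3 * μ₂ ^ 2 + 1) = 0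
  · left
    rcases mul_eq_zero.1 hd with hd | hd
    · exact ⟨μ₁, by linear_combination μ₁ ^ 2 * h₁ - μ₁ * h₂ + h₃, hd⟩
    · exact ⟨μ₂, by linear_combination μ₂ ^ 2 * h₁ - μ₂ * h₂ + h₃, hd⟩
  · right
    -- `3μ² + 1 = P'(μ)` for `P = z³ + z + λ`, and `P'(μ₁) = (μ₁ - μ₂)(μ₁ - μ₃)`.
    have hd₁ : (μ₁ - μ₂) * (μ₁ - μ₃) ≠ 0 := by
      convert left_ne_zero_of_mul hd using 1
      linear_combination -2 * μ₁ * h₁ + h₂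
    have hd₂ : (μ₂ - μ₁) * (μ₂ - μ₃) ≠ 0 := by
      convert right_ne_zero_of_mul hd using 1
      linear_combination -2 * μ₂ * h₁ + h₂
    refine ⟨μ₁, μ₂, μ₃, sub_ne_zero.1 (left_ne_zero_of_mul hd₁),
      sub_ne_zero.1 (right_ne_zero_of_mul hd₁), sub_ne_zero.1 (right_ne_zero_of_mul hd₂),
      h₁, h₂, by linear_combination h₃⟩

section ExplicitSolutions

variable {c lam μ μ₁ μ₂ μ₃ : ℂ}

/-- The solution with jet `(0, 0, c)` at `0` when `z³ + z + λ` has the simple roots `μ₁, μ₂, μ₃`: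
the weights are `c / P'(μⱼ)`, and `∑ⱼ μⱼᵏ / P'(μⱼ)` is `0` for `k = 0, 1` and `1` for `k = 2`. -/
noncomputable def simpleRootSolution (c μ₁ μ₂ μ₃ : ℂ) : ℝ → ℂ :=
  expPoly ![c / ((μ₁ - μ₂) * (μ₁ - μ₃)), c / ((μ₂ - μ₁) * (μ₂ - μ₃)),
    c / ((μ₃ - μ₁) * (μ₃ - μ₂))] 0 ![μ₁, μ₂, μ₃]

theorem simpleRootSolution_jet (h₁₂ : μ₁ ≠ μ₂) (h₁₃ : μ₁ ≠ μ₃) (h₂₃ : μ₂ ≠ μ₃) :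
    simpleRootSolution c μ₁ μ₂ μ₃ 0 = 0 ∧ deriv (simpleRootSolution c μ₁ μ₂ μ₃) 0 = 0 ∧
      iteratedDeriv 2 (simpleRootSolution c μ₁ μ₂ μ₃) 0 = c := by
  have := sub_ne_zero.2 h₁₂
  have := sub_ne_zero.2 h₁₃
  have := sub_ne_zero.2 h₂₃
  simp only [simpleRootSolution, deriv_expPoly, iteratedDeriv_two_expPoly, expPoly_zero,
    Fin.sum_univ_three, Fin.isValue, Matrix.cons_val_zero, Matrix.cons_val_one, Matrix.cons_val,
    Pi.mul_apply, add_zero, mul_zero, zero_mul, Pi.pow_apply]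
  refine ⟨?_, ?_, ?_⟩ <;> field_simp <;> ring

theorem solvesKdV_simpleRootSolution (hσ₁ : μ₁ + μ₂ + μ₃ = 0)
    (hσ₂ : μ₁ * μ₂ + μ₁ * μ₃ + μ₂ * μ₃ = 1) (c : ℂ) (L : ℝ) :
    SolvesKdV (-(μ₁ * μ₂ * μ₃)) L (simpleRootSolution c μ₁ μ₂ μ₃) := by
  refine solvesKdV_expPoly (fun j => ?_) (fun j => by simp) L
  fin_cases j
  · show μ₁ ^ 3 + μ₁ + -(μ₁ * μ₂ * μ₃) = 0
    linear_combination μ₁ ^ 2 * hσ₁ - μ₁ * hσ₂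
  · show μ₂ ^ 3 + μ₂ + -(μ₁ * μ₂ * μ₃) = 0
    linear_combination μ₂ ^ 2 * hσ₁ - μ₂ * hσ₂
  · show μ₃ ^ 3 + μ₃ + -(μ₁ * μ₂ * μ₃) = 0
    linear_combination μ₃ ^ 2 * hσ₁ - μ₃ * hσ₂

theorem simpleRootSolution_boundary_iff (hc : c ≠ 0) (h₁₂ : μ₁ ≠ μ₂) (h₁₃ : μ₁ ≠ μ₃)
    (h₂₃ : μ₂ ≠ μ₃) (L : ℝ) :
    simpleRootSolution c μ₁ μ₂ μ₃ L = 0 ∧ deriv (simpleRootSolution c μ₁ μ₂ μ₃) L = 0 ↔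
      cexp (μ₁ * L) = cexp (μ₂ * L) ∧ cexp (μ₁ * L) = cexp (μ₃ * L) := by
  have := sub_ne_zero.2 h₁₂
  have := sub_ne_zero.2 h₁₃
  have := sub_ne_zero.2 h₂₃
  simp only [simpleRootSolution, expPoly, deriv_expPoly, Fin.sum_univ_three, Fin.isValue,
    Matrix.cons_val_zero, Matrix.cons_val_one, Matrix.cons_val, Pi.add_apply, Pi.mul_apply,
    Pi.zero_apply, zero_mul, add_zero]
  generalize cexp (μ₁ * L) = E₁, cexp (μ₂ * L) = E₂, cexp (μ₃ * L) = E₃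
  constructor
  · rintro ⟨h₀, h₁⟩
    constructor
    · linear_combination (norm := skip) -(μ₁ - μ₂) / c * (μ₃ * h₀ - h₁)
      field_simp
      ring
    · linear_combination (norm := skip) -(μ₁ - μ₃) / c * (μ₂ * h₀ - h₁)
      field_simp
      ring
  · rintro ⟨rfl, rfl⟩
    constructor <;> field_simp <;> ring

theorem re_eq_zero_of_three_mul_sq_add_one (hμ : 3 * μ ^ 2 + 1 = 0) :
    μ.re = 0 ∧ μ.im ^ 2 = 1 / 3 := by
  have hre := congrArg re hμ
  have him := congrArg im hμ
  simp only [pow_two, add_re, mul_re, add_im, mul_im, re_ofNat, im_ofNat, one_re, one_im,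
    zero_re, zero_im] at hre him
  have h : μ.re = 0 := by
    rcases mul_eq_zero.1 (show μ.re * μ.im = 0 by linarith) with h | h
    · exact h
    · nlinarith [sq_nonneg μ.re]
  exact ⟨h, by nlinarith⟩

/-- The solution with jet `(0, 0, c)` at `0` when `μ` is a double root of `z³ + z + λ`; the third
root is then `-2μ`. -/
noncomputable def doubleRootSolution (c μ : ℂ) : ℝ → ℂ :=
  expPoly ![-c / 3, c / 3] ![0, -c * μ] ![-2 * μ, μ]

theorem doubleRootSolution_jet (hμ : 3 * μ ^ 2 + 1 = 0) :
    doubleRootSolution c μ 0 = 0 ∧ deriv (doubleRootSolution c μ) 0 = 0 ∧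
      iteratedDeriv 2 (doubleRootSolution c μ) 0 = c := by
  simp only [doubleRootSolution, deriv_expPoly, iteratedDeriv_two_expPoly, expPoly_zero,
    Fin.sum_univ_two, Pi.add_apply, Pi.mul_apply, Pi.pow_apply, Pi.ofNat_apply, Fin.isValue,
    Matrix.cons_val_zero, Matrix.cons_val_one, Matrix.cons_val_fin_one, mul_zero, zero_mul,
    add_zero]
  refine ⟨by ring, by ring, by linear_combination -c * hμ⟩

theorem solvesKdV_doubleRootSolution (hroot : μ ^ 3 + μ + lam = 0) (hμ : 3 * μ ^ 2 + 1 = 0)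
    (c : ℂ) (L : ℝ) : SolvesKdV lam L (doubleRootSolution c μ) := by
  refine solvesKdV_expPoly (fun j => ?_) (fun j => ?_) L <;> fin_cases j
  · show (-2 * μ) ^ 3 + -2 * μ + lam = 0
    linear_combination hroot - 3 * μ * hμ
  · exact hroot
  · exact zero_mul _
  · show -c * μ * (3 * μ ^ 2 + 1) = 0
    rw [hμ, mul_zero]

theorem doubleRootSolution_ne_zero (hc : c ≠ 0) (hμ : 3 * μ ^ 2 + 1 = 0) {L : ℝ} (hL : 0 < L) :
    doubleRootSolution c μ L ≠ 0 := by
  obtain ⟨hre, him⟩ := re_eq_zero_of_three_mul_sq_add_one hμ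
  have hnorm : ‖1 - 3 * μ * L‖ ≠ 1 := by
    have hsq : ‖1 - 3 * μ * L‖ ^ 2 = 1 + 3 * L ^ 2 := by
      simp only [Complex.sq_norm, normSq_apply, sub_re, sub_im, mul_re, mul_im, one_re, one_im,
        re_ofNat, im_ofNat, ofReal_re, ofReal_im, hre]
      linear_combination 9 * L ^ 2 * him
    intro h
    rw [h] at hsq
    nlinarith
  intro h
  apply hnorm
  simp only [doubleRootSolution, expPoly, Fin.sum_univ_two, Fin.isValue, Matrix.cons_val_zero,
    Matrix.cons_val_one, Matrix.cons_val_fin_one, zero_mul, add_zero] at h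
  have hE : cexp (-2 * μ * L) = (1 - 3 * μ * L) * cexp (μ * L) := by
    have : c / 3 * ((1 - 3 * μ * L) * cexp (μ * L) - cexp (-2 * μ * L)) = 0 := by
      linear_combination h
    exact (sub_eq_zero.1 ((mul_eq_zero.1 this).resolve_left (by simpa using hc))).symm
  simpa [norm_mul, Complex.norm_exp, hre] using (congrArg norm hE).symm

end ExplicitSolutions

theorem exists_pos_sq_add_sq_add_mul_eq {n m : ℤ} (hn : n ≠ 0) (hm : m ≠ 0) (hnm : n ≠ m) :
    ∃ k l : ℕ, 1 ≤ k ∧ 1 ≤ l ∧ (k ^ 2 + l ^ 2 + k * l : ℤ) = n ^ 2 - n * m + m ^ 2 := by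
  suffices ∃ k l : ℤ, 1 ≤ k ∧ 1 ≤ l ∧ k ^ 2 + l ^ 2 + k * l = n ^ 2 - n * m + m ^ 2 by
    obtain ⟨k, l, hk, hl, h⟩ := this
    exact ⟨k.toNat, l.toNat, by omega, by omega, by rwa [Int.toNat_of_nonneg (by omega),
      Int.toNat_of_nonneg (by omega)]⟩
  rcases lt_or_gt_of_ne hn with hn | hn <;> rcases lt_or_gt_of_ne hm with hm | hm
  · rcases lt_or_gt_of_ne hnm with h | h
    · exact ⟨-m, m - n, by omega, by omega, by ring⟩
    · exact ⟨-n, n - m, by omega, by omega, by ring⟩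
  · exact ⟨-n, m, by omega, by omega, by ring⟩
  · exact ⟨n, -m, by omega, by omega, by ring⟩
  · rcases lt_or_gt_of_ne hnm with h | h
    · exact ⟨n, m - n, by omega, by omega, by ring⟩
    · exact ⟨m, n - m, by omega, by omega, by ring⟩

theorem isCriticalLength_iff_exists_int {L : ℝ} (hL : 0 < L) :
    IsCriticalLength L ↔ ∃ n m : ℤ, n ≠ 0 ∧ m ≠ 0 ∧ n ≠ m ∧
      3 * L ^ 2 = 4 * π ^ 2 * (n ^ 2 - n * m + m ^ 2) := by
  have hsq (k l : ℝ) (hkl : 0 ≤ k ^ 2 + l ^ 2 + k * l) :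
      (2 * π * √((k ^ 2 + l ^ 2 + k * l) / 3)) ^ 2 = 4 * π ^ 2 * (k ^ 2 + l ^ 2 + k * l) / 3 := by
    rw [mul_pow, Real.sq_sqrt (by positivity)]
    ring
  constructor
  · rintro ⟨k, l, hk, hl, rfl⟩
    refine ⟨k, -l, by omega, by omega, by omega, ?_⟩
    rw [hsq _ _ (by positivity)]
    push_cast
    ring
  · rintro ⟨n, m, hn, hm, hnm, hL2⟩
    obtain ⟨k, l, hk, hl, hkl⟩ := exists_pos_sq_add_sq_add_mul_eq hn hm hnm
    have hkl' : ((k : ℝ) ^ 2 + l ^ 2 + k * l) = n ^ 2 - n * m + m ^ 2 := by exact_mod_cast hkl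
    refine ⟨k, l, hk, hl, (sq_eq_sq₀ hL.le (by positivity)).1 ?_⟩
    rw [hsq _ _ (by positivity), hkl']
    linarith

theorem isCriticalLength_iff_exists_roots {L : ℝ} (hL : 0 < L) :
    IsCriticalLength L ↔ ∃ μ₁ μ₂ μ₃ : ℂ, μ₁ ≠ μ₂ ∧ μ₁ ≠ μ₃ ∧ μ₂ ≠ μ₃ ∧ μ₁ + μ₂ + μ₃ = 0 ∧
      μ₁ * μ₂ + μ₁ * μ₃ + μ₂ * μ₃ = 1 ∧ cexp (μ₁ * L) = cexp (μ₂ * L) ∧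
        cexp (μ₁ * L) = cexp (μ₃ * L) := by
  have hL' : (L : ℂ) ≠ 0 := ofReal_ne_zero.2 hL.ne'
  rw [isCriticalLength_iff_exists_int hL]
  constructor
  · rintro ⟨n, m, hn, hm, hnm, hL2⟩
    -- `μ₁ - μ₂ = 2πin/L` and `μ₁ - μ₃ = 2πim/L`
    set ω : ℂ := 2 * π * I / (3 * L) with hω
    have hωL : ω * L = 2 * π * I / 3 := by
      rw [hω]
      field_simp
    have hω₀ : ω ≠ 0 := by simp [hω, hL', pi_ne_zero]
    have hne {a b : ℤ} (hab : a ≠ b) {x y : ℂ} (hx : x = a) (hy : y = b) : x * ω ≠ y * ω := by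
      rw [hx, hy]
      exact fun h => hab (by exact_mod_cast mul_right_cancel₀ hω₀ h)
    have hexp (a b : ℂ) (k : ℤ) (h : a - b = 3 * k) : cexp (a * ω * L) = cexp (b * ω * L) :=
      exp_eq_exp_iff_exists_int.2 ⟨k, by linear_combination (ω * L) * h + 3 * k * hωL⟩
    refine ⟨(n + m) * ω, (m - 2 * n) * ω, (n - 2 * m) * ω,
      hne (a := n + m) (b := m - 2 * n) (by omega) (by push_cast; ring) (by push_cast; ring),
      hne (a := n + m) (b := n - 2 * m) (by omega) (by push_cast; ring) (by push_cast; ring),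
      hne (a := m - 2 * n) (b := n - 2 * m) (by omega) (by push_cast; ring) (by push_cast; ring),
      by ring, ?_, hexp _ _ n (by ring), hexp _ _ m (by ring)⟩
    have hL2' : (3 * L ^ 2 : ℂ) = 4 * π ^ 2 * (n ^ 2 - n * m + m ^ 2) := by exact_mod_cast hL2
    rw [hω]
    field_simp
    linear_combination (-12 * π ^ 2 * (n ^ 2 - n * m + m ^ 2) : ℂ) * I_sq - 3 * hL2'
  · rintro ⟨μ₁, μ₂, μ₃, h₁₂, h₁₃, h₂₃, hσ₁, hσ₂, hE₂, hE₃⟩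
    obtain ⟨n, hn⟩ := exp_eq_exp_iff_exists_int.1 hE₂
    obtain ⟨m, hm⟩ := exp_eq_exp_iff_exists_int.1 hE₃
    refine ⟨n, m, ?_, ?_, ?_, ?_⟩
    · rintro rfl
      exact h₁₂ (mul_right_cancel₀ hL' (by simpa using hn))
    · rintro rfl
      exact h₁₃ (mul_right_cancel₀ hL' (by simpa using hm))
    · rintro rfl
      exact h₂₃ (mul_right_cancel₀ hL' (by linear_combination hm - hn))
    · set A := (μ₁ - μ₂) * L
      set B := (μ₁ - μ₃) * L
      set α := n * (2 * π * I)
      set β := m * (2 * π * I)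
      have hA : A = α := by linear_combination hn
      have hB : B = β := by linear_combination hm
      have hAB : A ^ 2 - A * B + B ^ 2 = -3 * L ^ 2 := by
        linear_combination (L : ℂ) ^ 2 * ((μ₁ + μ₂ + μ₃) * hσ₁ - 3 * hσ₂)
      have hC : (3 * L ^ 2 : ℂ) = 4 * π ^ 2 * (n ^ 2 - n * m + m ^ 2) := by
        linear_combination hAB - (A + α - β) * hA - (B + β - A) * hB
          - 4 * π ^ 2 * (n ^ 2 - n * m + m ^ 2) * I_sq
      exact_mod_cast hC

structure IsOverdeterminedSolution (lam : ℂ) (L : ℝ) (y : ℝ → ℂ) : Prop where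
  contDiff : ContDiff ℝ 3 y
  solves : SolvesKdV lam L y
  left : y 0 = 0 ∧ deriv y 0 = 0
  right : y L = 0 ∧ deriv y L = 0

namespace IsOverdeterminedSolution

theorem zero (lam : ℂ) (L : ℝ) : IsOverdeterminedSolution lam L 0 :=
  ⟨contDiff_const, fun x _ => by simp, by simp, by simp⟩

variable {lam : ℂ} {L : ℝ} {y : ℝ → ℂ}

theorem eqOn_zero_iff (hL : 0 < L) (hy : IsOverdeterminedSolution lam L y) :
    EqOn y 0 (Icc 0 L) ↔ iteratedDeriv 2 y 0 = 0 := by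
  constructor
  · intro h
    simpa [iteratedDeriv_const] using eqOn_iteratedDeriv_of_eqOn_Icc (k := 2) hL hy.contDiff
      contDiff_const h (by norm_num) (left_mem_Icc.2 hL.le)
  · intro h
    exact hy.solves.eqOn hy.contDiff contDiff_const (zero lam L).solves (by simp [hy.left.1])
      (by simp [hy.left.2]) (by simp [h])

theorem isCriticalLength (hL : 0 < L) (hy : IsOverdeterminedSolution lam L y)
    (hc : iteratedDeriv 2 y 0 ≠ 0) : IsCriticalLength L := by
  set c := iteratedDeriv 2 y 0
  rcases exists_double_root_or_simple_roots lam with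
    ⟨μ, hroot, hμ⟩ | ⟨μ₁, μ₂, μ₃, h₁₂, h₁₃, h₂₃, hσ₁, hσ₂, rfl⟩
  · obtain ⟨hw₀, hw₁, hw₂⟩ := doubleRootSolution_jet (c := c) hμ
    have hwL := hy.solves.boundary_eq (g := doubleRootSolution c μ) hL hy.contDiff
      (contDiff_expPoly _ _ _) (solvesKdV_doubleRootSolution hroot hμ c L)
      (hy.left.1.trans hw₀.symm) (hy.left.2.trans hw₁.symm) hw₂.symm
    exact absurd (hwL.1 ▸ hy.right.1) (doubleRootSolution_ne_zero hc hμ hL)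
  · obtain ⟨hw₀, hw₁, hw₂⟩ := simpleRootSolution_jet (c := c) h₁₂ h₁₃ h₂₃
    obtain ⟨hwL, hwL'⟩ := hy.solves.boundary_eq (g := simpleRootSolution c μ₁ μ₂ μ₃) hL
      hy.contDiff (contDiff_expPoly _ _ _) (solvesKdV_simpleRootSolution hσ₁ hσ₂ c L)
      (hy.left.1.trans hw₀.symm) (hy.left.2.trans hw₁.symm) hw₂.symm
    exact (isCriticalLength_iff_exists_roots hL).2 ⟨μ₁, μ₂, μ₃, h₁₂, h₁₃, h₂₃, hσ₁, hσ₂,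
      (simpleRootSolution_boundary_iff hc h₁₂ h₁₃ h₂₃ L).1 ⟨hwL ▸ hy.right.1, hwL' ▸ hy.right.2⟩⟩

end IsOverdeterminedSolution

theorem exists_isOverdeterminedSolution {L : ℝ} (hL : 0 < L) {c : ℂ}
    (hc : c ≠ 0 → IsCriticalLength L) :
    ∃ lam y, IsOverdeterminedSolution lam L y ∧ iteratedDeriv 2 y 0 = c := by
  rcases eq_or_ne c 0 with rfl | hc₀
  · exact ⟨0, 0, .zero 0 L, by simp⟩
  obtain ⟨μ₁, μ₂, μ₃, h₁₂, h₁₃, h₂₃, hσ₁, hσ₂, hE⟩ :=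
    (isCriticalLength_iff_exists_roots hL).1 (hc hc₀)
  obtain ⟨hw₀, hw₁, hw₂⟩ := simpleRootSolution_jet (c := c) h₁₂ h₁₃ h₂₃
  exact ⟨_, _, ⟨contDiff_expPoly _ _ _, solvesKdV_simpleRootSolution hσ₁ hσ₂ c L, ⟨hw₀, hw₁⟩,
    (simpleRootSolution_boundary_iff hc₀ h₁₂ h₁₃ h₂₃ L).2 hE⟩, hw₂⟩

theorem stmt10_general (N : ℕ) (ℓ : Fin N → ℝ) (hℓ : ∀ i, 0 < ℓ i) :
    (∃ lam : Fin N → ℂ, ∃ y : Fin N → ℝ → ℂ,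
      (∀ i, ContDiff ℝ 3 (y i)) ∧
      (∃ i, ∃ x ∈ Set.Icc (0:ℝ) (ℓ i), y i x ≠ 0) ∧
      (∀ i, ∀ x ∈ Set.Icc (0:ℝ) (ℓ i),
        lam i * y i x + deriv (y i) x + iteratedDeriv 3 (y i) x = 0) ∧
      (∀ i, y i (ℓ i) = 0 ∧ deriv (y i) (ℓ i) = 0) ∧
      (∀ i, y i 0 = 0 ∧ deriv (y i) 0 = 0) ∧
      ∑ i, iteratedDeriv 2 (y i) 0 = 0)
    ↔ ∃ i j : Fin N, i ≠ j ∧ IsCriticalLength (ℓ i) ∧ IsCriticalLength (ℓ j) := by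
  constructor
  · rintro ⟨lam, y, hcd, ⟨i, x, hx, hyx⟩, hsol, hright, hleft, hsum⟩
    have hy t : IsOverdeterminedSolution (lam t) (ℓ t) (y t) :=
      ⟨hcd t, hsol t, hleft t, hright t⟩
    have hi : iteratedDeriv 2 (y i) 0 ≠ 0 := fun h => hyx (((hy i).eqOn_zero_iff (hℓ i)).2 h hx)
    obtain ⟨j, hji, hj⟩ : ∃ j ≠ i, iteratedDeriv 2 (y j) 0 ≠ 0 := by
      by_contra! h
      exact hi (by rwa [Finset.sum_eq_single i (fun j _ => h j) (by simp)] at hsum)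
    exact ⟨i, j, hji.symm, (hy i).isCriticalLength (hℓ i) hi, (hy j).isCriticalLength (hℓ j) hj⟩
  · rintro ⟨i, j, hij, hi, hj⟩
    set c : Fin N → ℂ := Pi.single i 1 - Pi.single j 1
    have hc t (ht : c t ≠ 0) : IsCriticalLength (ℓ t) := by
      by_cases hti : t = i
      · exact hti ▸ hi
      by_cases htj : t = j
      · exact htj ▸ hj
      simp [c, hti, htj] at ht
    choose lam y hy hyc using fun t => exists_isOverdeterminedSolution (hℓ t) (hc t)
    refine ⟨lam, y, fun t => (hy t).contDiff, ⟨i, ?_⟩, fun t => (hy t).solves,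
      fun t => (hy t).right, fun t => (hy t).left, ?_⟩
    · by_contra! h
      simpa [hyc, c, hij] using ((hy i).eqOn_zero_iff (hℓ i)).1 h
    · simp [hyc, c, Finset.sum_sub_distrib]

theorem stmt10 (N : ℕ) (hN : 0 < N) (ℓ : Fin N → ℝ) (hℓ : ∀ i, 0 < ℓ i) :
    (∃ lam : Fin N → ℂ, ∃ y : Fin N → ℝ → ℂ,
      (∀ i, ContDiff ℝ 3 (y i)) ∧
      (∃ i, ∃ x ∈ Set.Icc (0:ℝ) (ℓ i), y i x ≠ 0) ∧
      (∀ i, ∀ x ∈ Set.Icc (0:ℝ) (ℓ i),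
        lam i * y i x + deriv (y i) x + iteratedDeriv 3 (y i) x = 0) ∧
      (∀ i, y i (ℓ i) = 0 ∧ deriv (y i) (ℓ i) = 0) ∧
      (∀ i, y i 0 = 0 ∧ deriv (y i) 0 = 0) ∧
      ∑ i, iteratedDeriv 2 (y i) 0 = 0)
    ↔ ∃ i j : Fin N, i ≠ j ∧ IsCriticalLength (ℓ i) ∧ IsCriticalLength (ℓ j) :=
  stmt10_general N ℓ hℓ
end

section
/- Let u_j (j=1,...,N) be smooth solutions of the damped linear KdV system ∂_t u_j + ∂_x u_j + ∂_x^3 u_j + a_j(x) u_j = 0 on (0,T)×(0,ℓ_j) with the network coupling conditions (u_j(t,0)=u_k(t,0), Σ_j ∂_x^2 u_j(t,0) = -α u_1(t,0), u_j(t,ℓ_j)=∂_x u_j(t,ℓ_j)=0), where a_j ≥ 0. Then ‖u^0‖_{L^2(𝒯)}^2 ≤ (1/T)∫_0^T Σ_j ∫_0^{ℓ_j}|u_j|^2 dx dt + (2α - N)∫_0^T |u_1(t,0)|^2 dt + Σ_j ∫_0^T |∂_x u_j(t,0)|^2 dt + 2 Σ_j ∫_0^T ∫_0^{ℓ_j}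 a_j(x)|u_j|^2 dx dt. -/
open MeasureTheory intervalIntegral Set

namespace Stmt18Aux

noncomputable def WX (v : ℝ → ℝ → ℝ) : ℝ → ℝ → ℝ :=
  fun t x => fderiv ℝ (fun p : ℝ×ℝ => v p.1 p.2) (t,x) (0,1)

noncomputable def WT (v : ℝ → ℝ → ℝ) : ℝ → ℝ → ℝ :=
  fun t x => fderiv ℝ (fun p : ℝ×ℝ => v p.1 p.2) (t,x) (1,0)

noncomputable def AF (v : ℝ → ℝ → ℝ) : ℝ → ℝ → ℝ :=
  fun t x => -(WT v t x + WX v t x + WX (WX (WX v)) t x)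

variable {v : ℝ → ℝ → ℝ} {ℓ : ℝ}

lemma contDiff_WX (hv : ContDiff ℝ (⊤ : ℕ∞) (fun p : ℝ×ℝ => v p.1 p.2)) :
    ContDiff ℝ (⊤ : ℕ∞) (fun p : ℝ×ℝ => WX v p.1 p.2) :=
  (hv.fderiv_right (le_refl _)).clm_apply contDiff_const

lemma contDiff_WT (hv : ContDiff ℝ (⊤ : ℕ∞) (fun p : ℝ×ℝ => v p.1 p.2)) :
    ContDiff ℝ (⊤ : ℕ∞) (fun p : ℝ×ℝ => WT v p.1 p.2) :=
  (hv.fderiv_right (le_refl _)).clm_apply contDiff_const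

lemma hasDerivAt_WX (hv : ContDiff ℝ (⊤ : ℕ∞) (fun p : ℝ×ℝ => v p.1 p.2)) (t x : ℝ) :
    HasDerivAt (v t) (WX v t x) x := by
  have h1 : HasDerivAt (fun y : ℝ => ((t, y) : ℝ×ℝ)) ((0,1) : ℝ×ℝ) x :=
    (hasDerivAt_const x t).prodMk (hasDerivAt_id x)
  exact ((hv.differentiable (by simp) (t,x)).hasFDerivAt).comp_hasDerivAt x h1

lemma hasDerivAt_WT (hv : ContDiff ℝ (⊤ : ℕ∞) (fun p : ℝ×ℝ => v p.1 p.2)) (t x : ℝ) :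
    HasDerivAt (fun s => v s x) (WT v t x) t := by
  have h1 : HasDerivAt (fun s : ℝ => ((s, x) : ℝ×ℝ)) ((1,0) : ℝ×ℝ) t :=
    (hasDerivAt_id t).prodMk (hasDerivAt_const t x)
  exact ((hv.differentiable (by simp) (t,x)).hasFDerivAt).comp_hasDerivAt t h1

lemma deriv_WX (hv : ContDiff ℝ (⊤ : ℕ∞) (fun p : ℝ×ℝ => v p.1 p.2)) (t x : ℝ) :
    deriv (v t) x = WX v t x := (hasDerivAt_WX hv t x).deriv

lemma deriv_eq_WX (hv : ContDiff ℝ (⊤ : ℕ∞) (fun p : ℝ×ℝ => v p.1 p.2)) (t : ℝ) :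
    deriv (v t) = WX v t := funext fun x => deriv_WX hv t x

lemma iteratedDeriv_two (hv : ContDiff ℝ (⊤ : ℕ∞) (fun p : ℝ×ℝ => v p.1 p.2)) (t x : ℝ) :
    iteratedDeriv 2 (v t) x = WX (WX v) t x := by
  have h2 : iteratedDeriv 2 (v t) = deriv (deriv (v t)) := by
    rw [show (2:ℕ) = 1 + 1 from rfl, iteratedDeriv_succ, iteratedDeriv_one]
  rw [h2, deriv_eq_WX hv]
  exact deriv_WX (contDiff_WX hv) t x

lemma iteratedDeriv_three (hv : ContDiff ℝ (⊤ : ℕ∞) (fun p : ℝ×ℝ => v p.1 p.2)) (t x : ℝ) :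
    iteratedDeriv 3 (v t) x = WX (WX (WX v)) t x := by
  have h3 : iteratedDeriv 3 (v t) = deriv (deriv (deriv (v t))) := by
    rw [show (3:ℕ) = 2 + 1 from rfl, iteratedDeriv_succ,
      show (2:ℕ) = 1 + 1 from rfl, iteratedDeriv_succ, iteratedDeriv_one]
  rw [h3, deriv_eq_WX hv, deriv_eq_WX (contDiff_WX hv)]
  exact deriv_WX (contDiff_WX (contDiff_WX hv)) t x

lemma continuous_AF (hv : ContDiff ℝ (⊤ : ℕ∞) (fun p : ℝ×ℝ => v p.1 p.2)) :
    Continuous (fun p : ℝ×ℝ => AF v p.1 p.2) := by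
  have h1 := (contDiff_WT hv).continuous
  have h2 := (contDiff_WX hv).continuous
  have h3 := (contDiff_WX (contDiff_WX (contDiff_WX hv))).continuous
  exact ((h1.add h2).add h3).neg

/-- differentiation under the integral sign -/
lemma hasDerivAt_FF (hv : ContDiff ℝ (⊤ : ℕ∞) (fun p : ℝ×ℝ => v p.1 p.2)) (t : ℝ) :
    HasDerivAt (fun s => ∫ x in (0:ℝ)..ℓ, (v s x)^2)
      (∫ x in (0:ℝ)..ℓ, 2 * v t x * WT v t x) t := by
  have hcWT := (contDiff_WT hv).continuous
  have hcont : Continuous fun p : ℝ×ℝ => 2 * v p.1 p.2 * WT v p.1 p.2 :=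
    (continuous_const.mul hv.continuous).mul hcWT
  obtain ⟨C, hC⟩ := (isCompact_Icc (a := t - 1) (b := t + 1)).prod
    (isCompact_uIcc (a := (0:ℝ)) (b := ℓ)) |>.exists_bound_of_continuousOn hcont.continuousOn
  refine (intervalIntegral.hasDerivAt_integral_of_dominated_loc_of_deriv_le
    (F := fun s x => (v s x)^2) (F' := fun s x => 2 * v s x * WT v s x)
    (bound := fun _ => C) (s := Metric.ball t 1) (Metric.ball_mem_nhds t one_pos) ?_ ?_ ?_ ?_ ?_ ?_).2
  · exact Filter.Eventually.of_forall fun s =>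
      ((hv.continuous.comp (Continuous.prodMk_right s)).pow 2).aestronglyMeasurable
  · exact ((hv.continuous.comp (Continuous.prodMk_right t)).pow 2).intervalIntegrable _ _
  · exact ((continuous_const.mul (hv.continuous.comp (Continuous.prodMk_right t))).mul
      (hcWT.comp (Continuous.prodMk_right t))).aestronglyMeasurable
  · refine Filter.Eventually.of_forall fun x hx s hs => ?_
    refine hC (s, x) ⟨?_, uIoc_subset_uIcc hx⟩
    have := Metric.mem_ball.mp hs
    rw [Real.dist_eq] at this
    constructor <;> [linarith [abs_lt.mp this]; linarith [abs_lt.mp this]]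
  · exact intervalIntegrable_const
  · refine Filter.Eventually.of_forall fun x hx s hs => ?_
    have h := (hasDerivAt_WT hv s x).fun_pow 2
    refine h.congr_deriv ?_
    push_cast
    ring

lemma continuous_DD (hv : ContDiff ℝ (⊤ : ℕ∞) (fun p : ℝ×ℝ => v p.1 p.2)) :
    Continuous fun t => ∫ x in (0:ℝ)..ℓ, 2 * v t x * WT v t x := by
  apply intervalIntegral.continuous_parametric_intervalIntegral_of_continuous'
    (f := fun t x => 2 * v t x * WT v t x)
  exact (continuous_const.mul hv.continuous).mul (contDiff_WT hv).continuous

lemma continuous_PHI (hv : ContDiff ℝ (⊤ : ℕ∞) (fun p : ℝ×ℝ => v p.1 p.2)) :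
    Continuous fun t => ∫ x in (0:ℝ)..ℓ, AF v t x * v t x := by
  apply intervalIntegral.continuous_parametric_intervalIntegral_of_continuous'
    (f := fun t x => AF v t x * v t x)
  exact (continuous_AF hv).mul hv.continuous


lemma DD_eq (hv : ContDiff ℝ (⊤ : ℕ∞) (fun p : ℝ×ℝ => v p.1 p.2)) (t : ℝ)
    (hz : v t ℓ = 0) (hz' : WX v t ℓ = 0) :
    ∫ x in (0:ℝ)..ℓ, 2 * v t x * WT v t x
      = (v t 0)^2 + 2 * v t 0 * WX (WX v) t 0 - (WX v t 0)^2
        - 2 * ∫ x in (0:ℝ)..ℓ, AF v t x * v t x := by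
  have hcv : Continuous (v t) := hv.continuous.comp (Continuous.prodMk_right t)
  have hc1 : Continuous (WX v t) := (contDiff_WX hv).continuous.comp (Continuous.prodMk_right t)
  have hc2 : Continuous (WX (WX v) t) :=
    (contDiff_WX (contDiff_WX hv)).continuous.comp (Continuous.prodMk_right t)
  have hc3 : Continuous (WX (WX (WX v)) t) :=
    (contDiff_WX (contDiff_WX (contDiff_WX hv))).continuous.comp (Continuous.prodMk_right t)
  have hcA : Continuous (AF v t) := (continuous_AF hv).comp (Continuous.prodMk_right t)
  have I1 : ∫ x in (0:ℝ)..ℓ, 2 * v t x * WX v t x = - (v t 0)^2 := by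
    have := intervalIntegral.integral_eq_sub_of_hasDerivAt
      (f := fun y => (v t y)^2) (f' := fun y => 2 * v t y * WX v t y)
      (a := 0) (b := ℓ) (fun x _ => by
        have h := (hasDerivAt_WX hv t x).fun_pow 2
        refine h.congr_deriv ?_; push_cast; ring)
      (((continuous_const.mul hcv).mul hc1).intervalIntegrable _ _)
    rw [this]; simp only [hz]; ring
  have I3 : ∫ x in (0:ℝ)..ℓ, 2 * v t x * WX (WX (WX v)) t x
      = -(2 * v t 0 * WX (WX v) t 0 - (WX v t 0)^2) := by
    have := intervalIntegral.integral_eq_sub_of_hasDerivAt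
      (f := fun y => 2 * (v t y * WX (WX v) t y) - (WX v t y)^2)
      (f' := fun y => 2 * v t y * WX (WX (WX v)) t y)
      (a := 0) (b := ℓ) (fun x _ => by
        have h1 := (hasDerivAt_WX hv t x).fun_mul
          (hasDerivAt_WX (contDiff_WX (contDiff_WX hv)) t x)
        have h2 := (hasDerivAt_WX (contDiff_WX hv) t x).fun_pow 2
        have h3 := (h1.const_mul (2:ℝ)).fun_sub h2
        refine h3.congr_deriv ?_; push_cast; ring)
      (((continuous_const.mul hcv).mul hc3).intervalIntegrable _ _)
    rw [this]; simp only [hz, hz']; ring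
  have hrepr : ∀ x, 2 * v t x * WT v t x
      = ((-(2 * v t x * WX v t x)) + (-(2 * v t x * WX (WX (WX v)) t x)))
        + (-2) * (AF v t x * v t x) := by
    intro x; simp only [AF]; ring
  have i1 : IntervalIntegrable (fun x => -(2 * v t x * WX v t x)) volume 0 ℓ :=
    (((continuous_const.mul hcv).mul hc1).neg).intervalIntegrable _ _
  have i3 : IntervalIntegrable (fun x => -(2 * v t x * WX (WX (WX v)) t x)) volume 0 ℓ :=
    (((continuous_const.mul hcv).mul hc3).neg).intervalIntegrable _ _
  have iA : IntervalIntegrable (fun x => (-2 : ℝ) * (AF v t x * v t x)) volume 0 ℓ :=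
    (continuous_const.mul (hcA.mul hcv)).intervalIntegrable _ _
  calc ∫ x in (0:ℝ)..ℓ, 2 * v t x * WT v t x
      = ∫ x in (0:ℝ)..ℓ, (((-(2 * v t x * WX v t x)) + (-(2 * v t x * WX (WX (WX v)) t x)))
          + (-2) * (AF v t x * v t x)) := by simp only [hrepr]
    _ = (∫ x in (0:ℝ)..ℓ, ((-(2 * v t x * WX v t x)) + (-(2 * v t x * WX (WX (WX v)) t x))))
          + ∫ x in (0:ℝ)..ℓ, (-2) * (AF v t x * v t x) :=
        intervalIntegral.integral_add (i1.add i3) iA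
    _ = ((∫ x in (0:ℝ)..ℓ, -(2 * v t x * WX v t x))
          + ∫ x in (0:ℝ)..ℓ, -(2 * v t x * WX (WX (WX v)) t x))
          + (-2) * ∫ x in (0:ℝ)..ℓ, AF v t x * v t x := by
        rw [intervalIntegral.integral_add i1 i3, intervalIntegral.integral_const_mul]
    _ = (v t 0)^2 + 2 * v t 0 * WX (WX v) t 0 - (WX v t 0)^2
          - 2 * ∫ x in (0:ℝ)..ℓ, AF v t x * v t x := by
        rw [intervalIntegral.integral_neg, intervalIntegral.integral_neg, I1, I3]; ring


end Stmt18Aux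

open Stmt18Aux

open scoped BigOperators
open MeasureTheory intervalIntegral Real Set

set_option maxHeartbeats 1000000 in
theorem stmt18 (N : ℕ) (hN : 0 < N) (T : ℝ) (hT : 0 < T) (α : ℝ) (hα : (N : ℝ) / 2 < α)
    (ℓ : Fin N → ℝ) (hℓ : ∀ j, 0 < ℓ j) (a : Fin N → ℝ → ℝ)
    (ha : ∀ j, ∀ x ∈ Set.Icc (0:ℝ) (ℓ j), 0 ≤ a j x)
    (u : Fin N → ℝ → ℝ → ℝ)
    (hu : ∀ j, ContDiff ℝ (⊤ : ℕ∞) (fun p : ℝ × ℝ => u j p.1 p.2))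
    (hpde : ∀ j, ∀ t ∈ Set.Icc (0:ℝ) T, ∀ x ∈ Set.Icc (0:ℝ) (ℓ j),
      deriv (fun τ => u j τ x) t + deriv (u j t) x + iteratedDeriv 3 (u j t) x
        + a j x * u j t x = 0)
    (hcont : ∀ j k, ∀ t ∈ Set.Icc (0:ℝ) T, u j t 0 = u k t 0)
    (hnode : ∀ t ∈ Set.Icc (0:ℝ) T, ∑ j, iteratedDeriv 2 (u j t) 0 = -α * u ⟨0, hN⟩ t 0)
    (hext : ∀ j, ∀ t ∈ Set.Icc (0:ℝ) T, u j t (ℓ j) = 0 ∧ deriv (u j t) (ℓ j) = 0) :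
    (∑ j, ∫ x in (0:ℝ)..(ℓ j), (u j 0 x)^2)
      ≤ (1/T) * (∫ t in (0:ℝ)..T, ∑ j, ∫ x in (0:ℝ)..(ℓ j), (u j t x)^2)
        + (2*α - (N : ℝ)) * (∫ t in (0:ℝ)..T, (u ⟨0, hN⟩ t 0)^2)
        + (∑ j, ∫ t in (0:ℝ)..T, (deriv (u j t) 0)^2)
        + 2 * ∑ j, ∫ t in (0:ℝ)..T, ∫ x in (0:ℝ)..(ℓ j), a j x * (u j t x)^2 := by
  classical
  -- translation of derivatives
  have hW1 : ∀ (j : Fin N) (t x : ℝ), deriv (u j t) x = WX (u j) t x :=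
    fun j t x => deriv_WX (hu j) t x
  have hW2 : ∀ (j : Fin N) (t x : ℝ), iteratedDeriv 2 (u j t) x = WX (WX (u j)) t x :=
    fun j t x => iteratedDeriv_two (hu j) t x
  have hW3 : ∀ (j : Fin N) (t x : ℝ), iteratedDeriv 3 (u j t) x = WX (WX (WX (u j))) t x :=
    fun j t x => iteratedDeriv_three (hu j) t x
  have hWt : ∀ (j : Fin N) (t x : ℝ), deriv (fun τ => u j τ x) t = WT (u j) t x :=
    fun j t x => (hasDerivAt_WT (hu j) t x).deriv
  -- the damping term as a smooth function
  have hAU : ∀ j, ∀ t ∈ Icc (0:ℝ) T, ∀ x ∈ Icc (0:ℝ) (ℓ j),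
      AF (u j) t x * u j t x = a j x * (u j t x)^2 := by
    intro j t ht x hx
    have h := hpde j t ht x hx
    rw [hWt, hW1, hW3] at h
    have hAa : AF (u j) t x = a j x * u j t x := by simp only [AF]; linarith
    rw [hAa]; ring
  -- derivative of the energy
  have hEderiv : ∀ t : ℝ, HasDerivAt (fun s => ∑ j, ∫ x in (0:ℝ)..(ℓ j), (u j s x)^2)
      (∑ j, ∫ x in (0:ℝ)..(ℓ j), 2 * u j t x * WT (u j) t x) t :=
    fun t => HasDerivAt.fun_sum fun j _ => hasDerivAt_FF (hu j) t
  have hEcont : Continuous fun s => ∑ j, ∫ x in (0:ℝ)..(ℓ j), (u j s x)^2 :=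
    continuous_iff_continuousAt.mpr fun t => (hEderiv t).continuousAt
  have hsumDcont : Continuous fun t => ∑ j, ∫ x in (0:ℝ)..(ℓ j), 2 * u j t x * WT (u j) t x :=
    continuous_finset_sum _ fun j _ => continuous_DD (hu j)
  -- boundary values
  have hDval : ∀ j, ∀ t ∈ Icc (0:ℝ) T,
      (∫ x in (0:ℝ)..(ℓ j), 2 * u j t x * WT (u j) t x)
        = (u j t 0)^2 + 2 * u j t 0 * WX (WX (u j)) t 0 - (WX (u j) t 0)^2
          - 2 * ∫ x in (0:ℝ)..(ℓ j), AF (u j) t x * u j t x := by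
    intro j t ht
    exact DD_eq (hu j) t (hext j t ht).1 (by rw [← hW1]; exact (hext j t ht).2)
  obtain ⟨g, hgdef⟩ : ∃ g : ℝ → ℝ, g = fun s =>
      (2*α - (N:ℝ)) * (u ⟨0,hN⟩ s 0)^2 + (∑ j, (WX (u j) s 0)^2)
        + 2 * ∑ j, ∫ x in (0:ℝ)..(ℓ j), AF (u j) s x * u j s x := ⟨_, rfl⟩
  have hgsum : ∀ t ∈ Icc (0:ℝ) T,
      (∑ j, ∫ x in (0:ℝ)..(ℓ j), 2 * u j t x * WT (u j) t x) = -(g t) := by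
    intro t ht
    have h0 : ∀ j : Fin N, u j t 0 = u ⟨0,hN⟩ t 0 := fun j => hcont j ⟨0,hN⟩ t ht
    have hW2sum : ∑ j, WX (WX (u j)) t 0 = -α * u ⟨0,hN⟩ t 0 := by
      calc ∑ j, WX (WX (u j)) t 0 = ∑ j, iteratedDeriv 2 (u j t) 0 :=
            Finset.sum_congr rfl fun j _ => (hW2 j t 0).symm
        _ = -α * u ⟨0,hN⟩ t 0 := hnode t ht
    calc (∑ j, ∫ x in (0:ℝ)..(ℓ j), 2 * u j t x * WT (u j) t x)
        = ∑ j, ((u ⟨0,hN⟩ t 0)^2 + 2 * u ⟨0,hN⟩ t 0 * WX (WX (u j)) t 0 - (WX (u j) t 0)^2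
            - 2 * ∫ x in (0:ℝ)..(ℓ j), AF (u j) t x * u j t x) := by
          refine Finset.sum_congr rfl fun j _ => ?_
          rw [hDval j t ht, h0 j]
      _ = (∑ _j : Fin N, (u ⟨0,hN⟩ t 0)^2)
            + 2 * u ⟨0,hN⟩ t 0 * (∑ j, WX (WX (u j)) t 0)
            - (∑ j, (WX (u j) t 0)^2)
            - 2 * ∑ j, ∫ x in (0:ℝ)..(ℓ j), AF (u j) t x * u j t x := by
          rw [Finset.sum_sub_distrib, Finset.sum_sub_distrib, Finset.sum_add_distrib,
            ← Finset.mul_sum, ← Finset.mul_sum]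
      _ = -(g t) := by
          rw [hW2sum]
          simp only [hgdef, Finset.sum_const, Finset.card_univ, Fintype.card_fin, nsmul_eq_mul]
          ring
  -- nonnegativity of g on [0,T]
  have hΦ0 : ∀ j, ∀ t ∈ Icc (0:ℝ) T,
      0 ≤ ∫ x in (0:ℝ)..(ℓ j), AF (u j) t x * u j t x := by
    intro j t ht
    apply intervalIntegral.integral_nonneg (hℓ j).le
    intro x hx
    rw [hAU j t ht x hx]
    exact mul_nonneg (ha j x hx) (sq_nonneg _)
  have hg0 : ∀ t ∈ Icc (0:ℝ) T, 0 ≤ g t := by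
    intro t ht
    simp only [hgdef]
    refine add_nonneg (add_nonneg (mul_nonneg (by linarith) (sq_nonneg _))
      (Finset.sum_nonneg fun j _ => sq_nonneg _))
      (mul_nonneg (by norm_num) (Finset.sum_nonneg fun j _ => hΦ0 j t ht))
  -- continuity of g
  have hgcont : Continuous g := by
    rw [hgdef]
    refine ((continuous_const.mul (((hu ⟨0,hN⟩).continuous.comp
      (continuous_id.prodMk continuous_const)).pow 2)).add
      (continuous_finset_sum _ fun j _ => ((contDiff_WX (hu j)).continuous.comp
        (continuous_id.prodMk continuous_const)).pow 2)).add
      (continuous_const.mul (continuous_finset_sum _ fun j _ => continuous_PHI (hu j)))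
  -- the key pointwise estimate
  have key : ∀ t ∈ Icc (0:ℝ) T,
      (∑ j, ∫ x in (0:ℝ)..(ℓ j), (u j 0 x)^2)
        ≤ (∑ j, ∫ x in (0:ℝ)..(ℓ j), (u j t x)^2) + ∫ s in (0:ℝ)..T, g s := by
    intro t ht
    have hftc := intervalIntegral.integral_eq_sub_of_hasDerivAt (a := 0) (b := t)
      (f := fun s => ∑ j, ∫ x in (0:ℝ)..(ℓ j), (u j s x)^2)
      (f' := fun s => ∑ j, ∫ x in (0:ℝ)..(ℓ j), 2 * u j s x * WT (u j) s x)
      (fun s _ => hEderiv s) (hsumDcont.intervalIntegrable _ _)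
    beta_reduce at hftc
    have hcg : ∫ s in (0:ℝ)..t, (∑ j, ∫ x in (0:ℝ)..(ℓ j), 2 * u j s x * WT (u j) s x)
        = ∫ s in (0:ℝ)..t, -(g s) := by
      apply intervalIntegral.integral_congr
      intro s hs
      rw [uIcc_of_le ht.1] at hs
      exact hgsum s ⟨hs.1, hs.2.trans ht.2⟩
    rw [intervalIntegral.integral_neg] at hcg
    have hadj := intervalIntegral.integral_add_adjacent_intervals (a := (0:ℝ)) (b := t) (c := T) (μ := volume) (f := g)
      (hgcont.intervalIntegrable _ _) (hgcont.intervalIntegrable _ _)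
    have hpos : 0 ≤ ∫ s in t..T, g s :=
      intervalIntegral.integral_nonneg ht.2 fun s hs => hg0 s ⟨ht.1.trans hs.1, hs.2⟩
    linarith
  -- integrate the estimate over [0,T]
  have hmain : T * (∑ j, ∫ x in (0:ℝ)..(ℓ j), (u j 0 x)^2)
      ≤ (∫ t in (0:ℝ)..T, ∑ j, ∫ x in (0:ℝ)..(ℓ j), (u j t x)^2)
        + T * ∫ s in (0:ℝ)..T, g s := by
    have hfint : IntervalIntegrable
        (fun _ : ℝ => (∑ j, ∫ x in (0:ℝ)..(ℓ j), (u j 0 x)^2)) volume 0 T :=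
      intervalIntegrable_const
    have hgint : IntervalIntegrable
        (fun t => (∑ j, ∫ x in (0:ℝ)..(ℓ j), (u j t x)^2) + ∫ s in (0:ℝ)..T, g s) volume 0 T :=
      (hEcont.add continuous_const).intervalIntegrable 0 T
    have hmo := intervalIntegral.integral_mono_on hT.le hfint hgint key
    rw [intervalIntegral.integral_const,
      intervalIntegral.integral_add (hEcont.intervalIntegrable _ _) intervalIntegrable_const,
      intervalIntegral.integral_const] at hmo
    simp only [sub_zero, smul_eq_mul] at hmo
    linarith
  -- decompose the integral of g
  have hR : (∫ s in (0:ℝ)..T, g s)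
      = (2*α - (N:ℝ)) * (∫ s in (0:ℝ)..T, (u ⟨0,hN⟩ s 0)^2)
        + (∑ j, ∫ s in (0:ℝ)..T, (WX (u j) s 0)^2)
        + 2 * ∑ j, ∫ s in (0:ℝ)..T, ∫ x in (0:ℝ)..(ℓ j), AF (u j) s x * u j s x := by
    have c1 : Continuous fun s => (2*α - (N:ℝ)) * (u ⟨0,hN⟩ s 0)^2 :=
      continuous_const.mul (((hu ⟨0,hN⟩).continuous.comp
        (continuous_id.prodMk continuous_const)).pow 2)
    have c2 : Continuous fun s => ∑ j, (WX (u j) s 0)^2 :=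
      continuous_finset_sum _ fun j _ => ((contDiff_WX (hu j)).continuous.comp
        (continuous_id.prodMk continuous_const)).pow 2
    have c3 : Continuous fun s : ℝ =>
        (2:ℝ) * ∑ j, ∫ x in (0:ℝ)..(ℓ j), AF (u j) s x * u j s x :=
      continuous_const.mul (continuous_finset_sum _ fun j _ => continuous_PHI (hu j))
    rw [hgdef]
    rw [intervalIntegral.integral_add ((c1.fun_add c2).intervalIntegrable _ _)
        (c3.intervalIntegrable _ _),
      intervalIntegral.integral_add (c1.intervalIntegrable _ _) (c2.intervalIntegrable _ _),
      intervalIntegral.integral_const_mul, intervalIntegral.integral_const_mul,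
      intervalIntegral.integral_finset_sum (f := fun j s => (WX (u j) s 0)^2)
        (fun j _ => (((contDiff_WX (hu j)).continuous.comp
          (continuous_id.prodMk continuous_const)).pow 2).intervalIntegrable _ _),
      intervalIntegral.integral_finset_sum
        (f := fun j s => ∫ x in (0:ℝ)..(ℓ j), AF (u j) s x * u j s x)
        (fun j _ => (continuous_PHI (hu j)).intervalIntegrable _ _)]
  -- rewrite the goal
  have ha2 : ∀ j : Fin N, (∫ t in (0:ℝ)..T, ∫ x in (0:ℝ)..(ℓ j), a j x * (u j t x)^2)
      = ∫ t in (0:ℝ)..T, ∫ x in (0:ℝ)..(ℓ j), AF (u j) t x * u j t x := by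
    intro j
    apply intervalIntegral.integral_congr
    intro t ht'
    rw [uIcc_of_le hT.le] at ht'
    apply intervalIntegral.integral_congr
    intro x hx
    rw [uIcc_of_le (hℓ j).le] at hx
    exact (hAU j t ht' x hx).symm
  simp only [hW1, ha2]
  -- final arithmetic
  have h5 := mul_le_mul_of_nonneg_left hmain (le_of_lt (one_div_pos.mpr hT))
  have e1 : (1/T) * (T * (∑ j, ∫ x in (0:ℝ)..(ℓ j), (u j 0 x)^2))
      = ∑ j, ∫ x in (0:ℝ)..(ℓ j), (u j 0 x)^2 := by
    field_simp
  have e2 : (1/T) * ((∫ t in (0:ℝ)..T, ∑ j, ∫ x in (0:ℝ)..(ℓ j), (u j t x)^2)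
        + T * ∫ s in (0:ℝ)..T, g s)
      = (1/T) * (∫ t in (0:ℝ)..T, ∑ j, ∫ x in (0:ℝ)..(ℓ j), (u j t x)^2)
        + ∫ s in (0:ℝ)..T, g s := by
    rw [mul_add]
    congr 1
    field_simp
  rw [e1, e2] at h5
  linarith [h5, hR]
end

section
/- Let u_j be smooth solutions of the damped linear KdV network system with nonnegative damping a_j. Then for all s ∈ [0,T]: Σ_j ∫_0^{ℓ_j}|u_j(s,x)|^2 dx + ∫_0^s Σ_j |∂_x u_j(t,0)|^2 dt + (2α - N)∫_0^s |u_1(t,0)|^2 dt + 2 Σ_j ∫_0^s ∫_0^{ℓ_j} a_j(x)|u_j|^2 dx dt = Σ_j ∫_0^{ℓ_j}|u_j(0,x)|^2 dx. In particular the L^2 norm ‖u(s,·)‖_{L^2(𝒯)} is nonincreasing in s. -/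
open scoped BigOperators
open MeasureTheory intervalIntegral Real Set


private lemma pd2_smooth {f : ℝ → ℝ → ℝ} (hf : ContDiff ℝ (⊤ : ℕ∞) (fun p : ℝ × ℝ => f p.1 p.2)) :
    ContDiff ℝ (⊤ : ℕ∞) (fun p : ℝ × ℝ => deriv (f p.1) p.2) := by
  have h : ContDiff ℝ (⊤ : ℕ∞) (fun p : ℝ × ℝ => fderiv ℝ (f p.1) p.2) := by
    apply ContDiff.fderiv (f := fun (p : ℝ × ℝ) (y : ℝ) => f p.1 y) (g := fun p : ℝ × ℝ => p.2)
      (hf.comp (((contDiff_fst).comp contDiff_fst).prodMk contDiff_snd)) contDiff_snd (by simp)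
  have he : (fun p : ℝ × ℝ => deriv (f p.1) p.2) = fun p : ℝ × ℝ => fderiv ℝ (f p.1) p.2 1 := by
    ext p; rw [← fderiv_apply_one_eq_deriv]
  rw [he]
  exact h.clm_apply contDiff_const

private lemma pd1_smooth {f : ℝ → ℝ → ℝ} (hf : ContDiff ℝ (⊤ : ℕ∞) (fun p : ℝ × ℝ => f p.1 p.2)) :
    ContDiff ℝ (⊤ : ℕ∞) (fun p : ℝ × ℝ => deriv (fun τ => f τ p.2) p.1) := by
  have hswap : ContDiff ℝ (⊤ : ℕ∞) (fun p : ℝ × ℝ => f p.2 p.1) :=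
    hf.comp (contDiff_snd.prodMk contDiff_fst)
  have h2 := pd2_smooth (f := fun x t => f t x) hswap
  exact h2.comp (contDiff_snd.prodMk contDiff_fst)

private lemma deriv_smooth {f : ℝ → ℝ} (hf : ContDiff ℝ (⊤ : ℕ∞) f) : ContDiff ℝ (⊤ : ℕ∞) (deriv f) := by
  have h := hf.fderiv_right (m := (⊤ : ℕ∞)) (by simp)
  have he : deriv f = fun x => fderiv ℝ f x 1 := by ext x; rw [← fderiv_apply_one_eq_deriv]
  rw [he]
  exact h.clm_apply contDiff_const

private lemma edge_deriv {w : ℝ → ℝ → ℝ} (hw : ContDiff ℝ (⊤ : ℕ∞) (fun p : ℝ × ℝ => w p.1 p.2))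
    (L : ℝ) (s : ℝ) :
    HasDerivAt (fun t => ∫ x in (0:ℝ)..L, (w t x)^2)
      (∫ x in (0:ℝ)..L, 2 * w s x * deriv (fun τ => w τ x) s) s := by
  have hwt : Continuous (fun p : ℝ × ℝ => deriv (fun τ => w τ p.2) p.1) :=
    (pd1_smooth hw).continuous
  have hwc : Continuous (fun p : ℝ × ℝ => w p.1 p.2) := hw.continuous
  have hF' : Continuous (fun p : ℝ × ℝ => 2 * w p.1 p.2 * deriv (fun τ => w τ p.2) p.1) := by
    fun_prop
  obtain ⟨C, hC⟩ := (isCompact_Icc.prod isCompact_uIcc :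
      IsCompact (Icc (s - 1) (s + 1) ×ˢ uIcc (0:ℝ) L)).exists_bound_of_continuousOn
    hF'.continuousOn
  have key := intervalIntegral.hasDerivAt_integral_of_dominated_loc_of_deriv_le
    (F := fun t x => (w t x)^2)
    (F' := fun t x => 2 * w t x * deriv (fun τ => w τ x) t)
    (x₀ := s) (a := (0:ℝ)) (b := L) (μ := volume) (bound := fun _ => C)
    (s := Metric.ball s 1) (Metric.ball_mem_nhds s one_pos)
    (Filter.Eventually.of_forall fun t =>
      (Continuous.aestronglyMeasurable (by fun_prop : Continuous fun x => (w t x)^2)))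
    ((Continuous.intervalIntegrable (by fun_prop) 0 L))
    (Continuous.aestronglyMeasurable (hF'.comp (continuous_const.prodMk continuous_id)))
    (Filter.Eventually.of_forall ?_)
    (intervalIntegrable_const)
    (Filter.Eventually.of_forall ?_)
  · exact key.2
  · intro x hx t ht
    have hx' : x ∈ uIcc (0:ℝ) L := uIoc_subset_uIcc hx
    have ht' : t ∈ Icc (s-1) (s+1) := by
      have := Metric.mem_ball.mp ht
      rw [Real.dist_eq] at this
      constructor <;> [linarith [abs_lt.mp this]; linarith [abs_lt.mp this]]
    simpa using hC (t, x) ⟨ht', hx'⟩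
  · intro x _ t _
    have hdiff : HasDerivAt (fun τ => w τ x) (deriv (fun τ => w τ x) t) t := by
      have : Differentiable ℝ (fun τ => w τ x) :=
        (hw.comp (contDiff_id.prodMk contDiff_const)).differentiable (by simp)
      exact (this t).hasDerivAt
    have := hdiff.pow 2
    convert this using 1
    · rfl
    · rfl
    rw [show (2:ℕ) - 1 = 1 from rfl, pow_one]
    push_cast
    ring

private lemma edge_ibp {w : ℝ → ℝ → ℝ} (hw : ContDiff ℝ (⊤ : ℕ∞) (fun p : ℝ × ℝ => w p.1 p.2))
    (L : ℝ) (t : ℝ) (h0 : w t L = 0) (h1 : deriv (w t) L = 0) :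
    ∫ x in (0:ℝ)..L, 2 * w t x * deriv (fun τ => w τ x) t
      = (w t 0)^2 + 2 * w t 0 * deriv (deriv (w t)) 0 - (deriv (w t) 0)^2
        - 2 * ∫ x in (0:ℝ)..L,
            (-(deriv (fun τ => w τ x) t + deriv (w t) x + deriv (deriv (deriv (w t))) x))
              * w t x := by
  have hx0 : ContDiff ℝ (⊤ : ℕ∞) (w t) := hw.comp (contDiff_const.prodMk contDiff_id)
  have hx1 : ContDiff ℝ (⊤ : ℕ∞) (deriv (w t)) := deriv_smooth hx0
  have hx2 : ContDiff ℝ (⊤ : ℕ∞) (deriv (deriv (w t))) := deriv_smooth hx1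
  have hx3 : ContDiff ℝ (⊤ : ℕ∞) (deriv (deriv (deriv (w t)))) := deriv_smooth hx2
  have hwt : Continuous fun x => deriv (fun τ => w τ x) t := by
    have := (pd1_smooth hw).continuous
    exact this.comp (continuous_const.prodMk continuous_id)
  have hD0 : ∀ x : ℝ, HasDerivAt (w t) (deriv (w t) x) x :=
    fun x => (hx0.differentiable (by simp) x).hasDerivAt
  have hD1 : ∀ x : ℝ, HasDerivAt (deriv (w t)) (deriv (deriv (w t)) x) x :=
    fun x => (hx1.differentiable (by simp) x).hasDerivAt
  have hD2 : ∀ x : ℝ, HasDerivAt (deriv (deriv (w t))) (deriv (deriv (deriv (w t))) x) x :=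
    fun x => (hx2.differentiable (by simp) x).hasDerivAt
  have ftc1 : ∫ x in (0:ℝ)..L, 2 * w t x * deriv (w t) x = (w t L)^2 - (w t 0)^2 := by
    have := intervalIntegral.integral_eq_sub_of_hasDerivAt
      (f := fun x => (w t x)^2) (f' := fun x => 2 * w t x * deriv (w t) x)
      (fun x _ => by
        have := (hD0 x).pow 2
        convert this using 1; · rfl
        · rfl
        rw [show (2:ℕ) - 1 = 1 from rfl, pow_one]; push_cast; ring)
      ((Continuous.intervalIntegrable (by
        have := hx0.continuous; have := hx1.continuous; fun_prop) 0 L))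
    exact this
  have ftc2 : ∫ x in (0:ℝ)..L, 2 * w t x * deriv (deriv (deriv (w t))) x
      = (2 * (w t L * deriv (deriv (w t)) L) - (deriv (w t) L)^2)
        - (2 * (w t 0 * deriv (deriv (w t)) 0) - (deriv (w t) 0)^2) := by
    have := intervalIntegral.integral_eq_sub_of_hasDerivAt
      (f := fun x => 2 * (w t x * deriv (deriv (w t)) x) - (deriv (w t) x)^2)
      (f' := fun x => 2 * w t x * deriv (deriv (deriv (w t))) x)
      (fun x _ => by
        have h := (((hD0 x).mul (hD2 x)).const_mul (2:ℝ)).sub ((hD1 x).pow 2)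
        convert h using 1; · rfl
        rw [show (2:ℕ) - 1 = 1 from rfl, pow_one]; push_cast; ring)
      ((Continuous.intervalIntegrable (by
        have := hx0.continuous; have := hx3.continuous; fun_prop) 0 L))
    exact this
  have hsplit : ∀ x : ℝ, 2 * w t x * deriv (fun τ => w τ x) t
      = -(2 * w t x * deriv (w t) x) - 2 * w t x * deriv (deriv (deriv (w t))) x
        - 2 * ((-(deriv (fun τ => w τ x) t + deriv (w t) x + deriv (deriv (deriv (w t))) x))
              * w t x) := by
    intro x; ring
  rw [intervalIntegral.integral_congr (g :=
      fun x => -(2 * w t x * deriv (w t) x) - 2 * w t x * deriv (deriv (deriv (w t))) x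
        - 2 * ((-(deriv (fun τ => w τ x) t + deriv (w t) x + deriv (deriv (deriv (w t))) x))
              * w t x)) (fun x _ => hsplit x)]
  have i1 : IntervalIntegrable (fun x => -(2 * w t x * deriv (w t) x)) volume 0 L :=
    Continuous.intervalIntegrable (by have := hx0.continuous; have := hx1.continuous; fun_prop) 0 L
  have i2 : IntervalIntegrable (fun x => 2 * w t x * deriv (deriv (deriv (w t))) x) volume 0 L :=
    Continuous.intervalIntegrable (by have := hx0.continuous; have := hx3.continuous; fun_prop) 0 L
  have i3 : IntervalIntegrable (fun x =>
      2 * ((-(deriv (fun τ => w τ x) t + deriv (w t) x + deriv (deriv (deriv (w t))) x))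
        * w t x)) volume 0 L :=
    Continuous.intervalIntegrable (by
      have := hx0.continuous; have := hx1.continuous; have := hx3.continuous; fun_prop) 0 L
  rw [intervalIntegral.integral_sub (i1.sub i2) i3, intervalIntegral.integral_sub i1 i2,
    intervalIntegral.integral_neg, ftc1, ftc2, intervalIntegral.integral_const_mul]
  rw [h0, h1]
  ring

theorem stmt19 (N : ℕ) (hN : 0 < N) (T : ℝ) (hT : 0 < T) (α : ℝ) (hα : (N : ℝ) / 2 < α)
    (ℓ : Fin N → ℝ) (hℓ : ∀ j, 0 < ℓ j) (a : Fin N → ℝ → ℝ)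
    (ha : ∀ j, ∀ x ∈ Set.Icc (0:ℝ) (ℓ j), 0 ≤ a j x)
    (u : Fin N → ℝ → ℝ → ℝ)
    (hu : ∀ j, ContDiff ℝ (⊤ : ℕ∞) (fun p : ℝ × ℝ => u j p.1 p.2))
    (hpde : ∀ j, ∀ t ∈ Set.Icc (0:ℝ) T, ∀ x ∈ Set.Icc (0:ℝ) (ℓ j),
      deriv (fun τ => u j τ x) t + deriv (u j t) x + iteratedDeriv 3 (u j t) x
        + a j x * u j t x = 0)
    (hcont : ∀ j k, ∀ t ∈ Set.Icc (0:ℝ) T, u j t 0 = u k t 0)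
    (hnode : ∀ t ∈ Set.Icc (0:ℝ) T, ∑ j, iteratedDeriv 2 (u j t) 0 = -α * u ⟨0, hN⟩ t 0)
    (hext : ∀ j, ∀ t ∈ Set.Icc (0:ℝ) T, u j t (ℓ j) = 0 ∧ deriv (u j t) (ℓ j) = 0) :
    (∀ s ∈ Set.Icc (0:ℝ) T,
      (∑ j, ∫ x in (0:ℝ)..(ℓ j), (u j s x)^2)
        + (∫ t in (0:ℝ)..s, ∑ j, (deriv (u j t) 0)^2)
        + (2*α - (N : ℝ)) * (∫ t in (0:ℝ)..s, (u ⟨0, hN⟩ t 0)^2)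
        + 2 * ∑ j, ∫ t in (0:ℝ)..s, ∫ x in (0:ℝ)..(ℓ j), a j x * (u j t x)^2
      = ∑ j, ∫ x in (0:ℝ)..(ℓ j), (u j 0 x)^2) ∧
    AntitoneOn (fun s => Real.sqrt (∑ j, ∫ x in (0:ℝ)..(ℓ j), (u j s x)^2)) (Set.Icc 0 T) := by
  have hiter3 : ∀ f : ℝ → ℝ, iteratedDeriv 3 f = deriv (deriv (deriv f)) := by
    intro f
    rw [show (3:ℕ) = 2+1 from rfl, iteratedDeriv_succ,
      show (2:ℕ) = 1+1 from rfl, iteratedDeriv_succ, iteratedDeriv_one]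
  have hiter2 : ∀ f : ℝ → ℝ, iteratedDeriv 2 f = deriv (deriv f) := by
    intro f
    rw [show (2:ℕ) = 1+1 from rfl, iteratedDeriv_succ, iteratedDeriv_one]
  -- smoothness of partial derivatives
  have hP1 : ∀ j, ContDiff ℝ (⊤ : ℕ∞) (fun p : ℝ × ℝ => deriv (u j p.1) p.2) :=
    fun j => pd2_smooth (hu j)
  have hP2 : ∀ j, ContDiff ℝ (⊤ : ℕ∞) (fun p : ℝ × ℝ => deriv (deriv (u j p.1)) p.2) :=
    fun j => pd2_smooth (f := fun t => deriv (u j t)) (hP1 j)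
  have hP3 : ∀ j, ContDiff ℝ (⊤ : ℕ∞) (fun p : ℝ × ℝ => deriv (deriv (deriv (u j p.1))) p.2) :=
    fun j => pd2_smooth (f := fun t => deriv (deriv (u j t))) (hP2 j)
  have hQ : ∀ j, ContDiff ℝ (⊤ : ℕ∞) (fun p : ℝ × ℝ => deriv (fun τ => u j τ p.2) p.1) :=
    fun j => pd1_smooth (hu j)
  -- the (smooth stand-in for) a(x) u^2 integrand
  have hgc : ∀ j, Continuous (fun p : ℝ × ℝ =>
      (-(deriv (fun τ => u j τ p.2) p.1 + deriv (u j p.1) p.2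
        + deriv (deriv (deriv (u j p.1))) p.2)) * u j p.1 p.2) := by
    intro j
    have h1 := (hQ j).continuous
    have h2 := (hP1 j).continuous
    have h3 := (hP3 j).continuous
    have h4 := (hu j).continuous
    fun_prop
  have hqa : ∀ j, ∀ t ∈ Set.Icc (0:ℝ) T, ∀ x ∈ Set.Icc (0:ℝ) (ℓ j),
      (-(deriv (fun τ => u j τ x) t + deriv (u j t) x + deriv (deriv (deriv (u j t))) x))
        * u j t x = a j x * (u j t x)^2 := by
    intro j t ht x hx
    have h := hpde j t ht x hx
    rw [hiter3] at h
    have h2 : a j x * u j t x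
        = -(deriv (fun τ => u j τ x) t + deriv (u j t) x + deriv (deriv (deriv (u j t))) x) := by
      linarith
    rw [← h2]; ring
  -- continuity of the pieces of G
  have hcA : Continuous fun t => ∑ j, (deriv (u j t) 0)^2 := by
    apply continuous_finset_sum
    intro j _
    exact ((hP1 j).continuous.comp (continuous_id.prodMk continuous_const)).pow 2
  have hcB : Continuous fun t => (2*α - (N:ℝ)) * (u ⟨0, hN⟩ t 0)^2 := by
    have := (hu ⟨0, hN⟩).continuous.comp (continuous_id.prodMk (continuous_const (y := (0:ℝ))))
    fun_prop
  have hcC : ∀ j, Continuous fun t => ∫ x in (0:ℝ)..(ℓ j),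
      (-(deriv (fun τ => u j τ x) t + deriv (u j t) x + deriv (deriv (deriv (u j t))) x))
        * u j t x := by
    intro j
    exact intervalIntegral.continuous_parametric_intervalIntegral_of_continuous'
      (f := fun t x => (-(deriv (fun τ => u j τ x) t + deriv (u j t) x
        + deriv (deriv (deriv (u j t))) x)) * u j t x) (hgc j) 0 (ℓ j)
  have hcC' : Continuous fun t => 2 * ∑ j, ∫ x in (0:ℝ)..(ℓ j),
      (-(deriv (fun τ => u j τ x) t + deriv (u j t) x + deriv (deriv (deriv (u j t))) x))
        * u j t x :=
    (continuous_const.mul (continuous_finset_sum _ fun j _ => hcC j))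
  -- G
  set G : ℝ → ℝ := fun t => (∑ j, (deriv (u j t) 0)^2)
      + (2*α - (N:ℝ)) * (u ⟨0, hN⟩ t 0)^2
      + 2 * ∑ j, ∫ x in (0:ℝ)..(ℓ j),
          (-(deriv (fun τ => u j τ x) t + deriv (u j t) x + deriv (deriv (deriv (u j t))) x))
            * u j t x with hGdef
  have hGcont : Continuous G := (hcA.add hcB).add hcC'
  -- derivative of the energy
  have hE' : ∀ s : ℝ, HasDerivAt (fun r => ∑ j, ∫ x in (0:ℝ)..(ℓ j), (u j r x)^2)
      (∑ j, ∫ x in (0:ℝ)..(ℓ j), 2 * u j s x * deriv (fun τ => u j τ x) s) s :=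
    fun s => HasDerivAt.fun_sum (fun j _ => edge_deriv (hu j) (ℓ j) s)
  have hEG : ∀ s ∈ Set.Icc (0:ℝ) T,
      HasDerivAt (fun r => ∑ j, ∫ x in (0:ℝ)..(ℓ j), (u j r x)^2) (-(G s)) s := by
    intro s hs
    have hval : (∑ j, ∫ x in (0:ℝ)..(ℓ j), 2 * u j s x * deriv (fun τ => u j τ x) s)
        = -(G s) := by
      rw [Finset.sum_congr rfl
        (fun j _ => edge_ibp (hu j) (ℓ j) s (hext j s hs).1 (hext j s hs).2)]
      rw [Finset.sum_sub_distrib, Finset.sum_sub_distrib, Finset.sum_add_distrib]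
      have hA : ∑ j : Fin N, (u j s 0)^2 = (N:ℝ) * (u ⟨0, hN⟩ s 0)^2 := by
        rw [Finset.sum_congr rfl (fun j _ => by rw [hcont j ⟨0, hN⟩ s hs]),
          Finset.sum_const, Finset.card_univ, Fintype.card_fin, nsmul_eq_mul]
      have hB : ∑ j : Fin N, 2 * u j s 0 * deriv (deriv (u j s)) 0
          = 2 * u ⟨0, hN⟩ s 0 * (-α * u ⟨0, hN⟩ s 0) := by
        rw [← hnode s hs, Finset.mul_sum]
        apply Finset.sum_congr rfl
        intro j _
        rw [hcont j ⟨0, hN⟩ s hs, hiter2]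
      have hD : ∑ j : Fin N, 2 * ∫ x in (0:ℝ)..(ℓ j),
            (-(deriv (fun τ => u j τ x) s + deriv (u j s) x
              + deriv (deriv (deriv (u j s))) x)) * u j s x
          = 2 * ∑ j : Fin N, ∫ x in (0:ℝ)..(ℓ j),
            (-(deriv (fun τ => u j τ x) s + deriv (u j s) x
              + deriv (deriv (deriv (u j s))) x)) * u j s x := by
        rw [Finset.mul_sum]
      rw [hA, hB, hD]
      simp only [hGdef]
      ring
    exact hval ▸ hE' s
  -- FTC for the primitive of G
  have hFTC : ∀ s : ℝ, HasDerivAt (fun r => ∫ t in (0:ℝ)..r, G t) (G s) s :=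
    fun s => (hGcont.integral_hasStrictDerivAt 0 s).hasDerivAt
  -- the conservation law
  have hPhi : ∀ s ∈ Set.Icc (0:ℝ) T,
      (∑ j, ∫ x in (0:ℝ)..(ℓ j), (u j s x)^2) + (∫ t in (0:ℝ)..s, G t)
        = ∑ j, ∫ x in (0:ℝ)..(ℓ j), (u j 0 x)^2 := by
    have hkey := constant_of_has_deriv_right_zero
      (f := fun r => (∑ j, ∫ x in (0:ℝ)..(ℓ j), (u j r x)^2) + ∫ t in (0:ℝ)..r, G t)
      (a := (0:ℝ)) (b := T)
      (Continuous.continuousOn (by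
        apply Continuous.add
        · exact continuous_iff_continuousAt.mpr fun s => (hE' s).continuousAt
        · exact continuous_iff_continuousAt.mpr fun s => (hFTC s).continuousAt))
      (by
        intro x hx
        have h := (hEG x ⟨hx.1, hx.2.le⟩).add (hFTC x)
        rw [neg_add_cancel] at h
        exact h.hasDerivWithinAt)
    intro s hs
    have := hkey s hs
    simpa using this
  -- integrability facts over [s1, s2]
  have intG : ∀ s₁ s₂ : ℝ, IntervalIntegrable G volume s₁ s₂ :=
    fun s₁ s₂ => hGcont.intervalIntegrable s₁ s₂
  -- splitting of ∫ G
  have hGsplit : ∀ s : ℝ, (∫ t in (0:ℝ)..s, G t)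
      = (∫ t in (0:ℝ)..s, ∑ j, (deriv (u j t) 0)^2)
        + (2*α - (N:ℝ)) * (∫ t in (0:ℝ)..s, (u ⟨0, hN⟩ t 0)^2)
        + 2 * ∑ j, ∫ t in (0:ℝ)..s, ∫ x in (0:ℝ)..(ℓ j),
            (-(deriv (fun τ => u j τ x) t + deriv (u j t) x
              + deriv (deriv (deriv (u j t))) x)) * u j t x := by
    intro s
    simp only [hGdef]
    rw [intervalIntegral.integral_add ((hcA.intervalIntegrable 0 s).add
        (hcB.intervalIntegrable 0 s)) (hcC'.intervalIntegrable 0 s),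
      intervalIntegral.integral_add (hcA.intervalIntegrable 0 s) (hcB.intervalIntegrable 0 s),
      intervalIntegral.integral_const_mul, intervalIntegral.integral_const_mul,
      intervalIntegral.integral_finset_sum (fun j _ => (hcC j).intervalIntegrable 0 s)]
  -- converting the a-integrals to the smooth ones
  have hag : ∀ s ∈ Set.Icc (0:ℝ) T, ∀ j : Fin N,
      (∫ t in (0:ℝ)..s, ∫ x in (0:ℝ)..(ℓ j), a j x * (u j t x)^2)
        = ∫ t in (0:ℝ)..s, ∫ x in (0:ℝ)..(ℓ j),
            (-(deriv (fun τ => u j τ x) t + deriv (u j t) x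
              + deriv (deriv (deriv (u j t))) x)) * u j t x := by
    intro s hs j
    apply intervalIntegral.integral_congr
    intro t ht
    rw [uIcc_of_le hs.1] at ht
    apply intervalIntegral.integral_congr
    intro x hx
    rw [uIcc_of_le (hℓ j).le] at hx
    exact (hqa j t ⟨ht.1, ht.2.trans hs.2⟩ x hx).symm
  -- nonnegativity of G on [0, T]
  have hGnn : ∀ t ∈ Set.Icc (0:ℝ) T, 0 ≤ G t := by
    intro t ht
    simp only [hGdef]
    have h1 : (0:ℝ) ≤ ∑ j, (deriv (u j t) 0)^2 :=
      Finset.sum_nonneg fun j _ => sq_nonneg _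
    have h2 : (0:ℝ) ≤ (2*α - (N:ℝ)) * (u ⟨0, hN⟩ t 0)^2 :=
      mul_nonneg (by linarith) (sq_nonneg _)
    have h3 : (0:ℝ) ≤ 2 * ∑ j, ∫ x in (0:ℝ)..(ℓ j),
        (-(deriv (fun τ => u j τ x) t + deriv (u j t) x
          + deriv (deriv (deriv (u j t))) x)) * u j t x := by
      apply mul_nonneg zero_le_two
      apply Finset.sum_nonneg
      intro j _
      apply intervalIntegral.integral_nonneg (hℓ j).le
      intro x hx
      rw [hqa j t ht x hx]
      exact mul_nonneg (ha j x hx) (sq_nonneg _)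
    linarith
  constructor
  · intro s hs
    have h0 := hPhi s hs
    have h1 := hGsplit s
    have h2 : (2:ℝ) * ∑ j, ∫ t in (0:ℝ)..s, ∫ x in (0:ℝ)..(ℓ j), a j x * (u j t x)^2
        = 2 * ∑ j, ∫ t in (0:ℝ)..s, ∫ x in (0:ℝ)..(ℓ j),
            (-(deriv (fun τ => u j τ x) t + deriv (u j t) x
              + deriv (deriv (deriv (u j t))) x)) * u j t x := by
      rw [Finset.sum_congr rfl (fun j _ => hag s hs j)]
    linarith
  · intro s₁ h1 s₂ h2 h12
    have e1 := hPhi s₁ h1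
    have e2 := hPhi s₂ h2
    have hmono : (∫ t in (0:ℝ)..s₁, G t) ≤ ∫ t in (0:ℝ)..s₂, G t := by
      rw [← intervalIntegral.integral_add_adjacent_intervals (intG 0 s₁) (intG s₁ s₂)]
      have hnn : (0:ℝ) ≤ ∫ t in s₁..s₂, G t :=
        intervalIntegral.integral_nonneg h12
          (fun t ht => hGnn t ⟨h1.1.trans ht.1, ht.2.trans h2.2⟩)
      linarith
    have hle : (∑ j, ∫ x in (0:ℝ)..(ℓ j), (u j s₂ x)^2)
        ≤ ∑ j, ∫ x in (0:ℝ)..(ℓ j), (u j s₁ x)^2 := by linarith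
    exact Real.sqrt_le_sqrt hle
end
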